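/- arXiv:2011.04645 — 12 statements merged into one kernel-verified Lean document; each statement's English description precedes it below -/
import Mathlib

section
/- Let ρ and σ be nonzero positive semidefinite operators on a finite-dimensional Hilbert space with supp(ρ) ⊆ supp(σ). Then D∞(ρ‖σ) ≤ log(1 + ‖ρ−σ‖₁ / λ_min(σ)) ≤ ‖ρ−σ‖₁ / λ_min(σ), where λ_min(σ) is the smallest nonzero eigenvalue of σ and D∞(ρ‖σ) := inf{λ ∈ ℝ : ρ ≤ e^λ σ}. -/
open Matrix
open scoped ComplexOrder

/-- Trace norm of a complex matrix: sum of singular values, i.e. of the square roots of the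
eigenvalues of `Aᴴ * A`. -/
noncomputable def traceNorm {d : ℕ} (A : Matrix (Fin d) (Fin d) ℂ) : ℝ :=
  ∑ i, Real.sqrt ((Matrix.isHermitian_conjTranspose_mul_self A).eigenvalues i)

/-- Max-relative entropy `D∞(ρ‖σ) := inf {λ : ρ ≤ e^λ σ}` (Löwner order). -/
noncomputable def Dmax {d : ℕ} (ρ σ : Matrix (Fin d) (Fin d) ℂ) : ℝ :=
  sInf {l : ℝ | (Real.exp l • σ - ρ).PosSemidef}

/-- Smallest nonzero eigenvalue of a Hermitian matrix. -/
noncomputable def lambdaMin {d : ℕ} (σ : Matrix (Fin d) (Fin d) ℂ)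
    (hσ : σ.IsHermitian) : ℝ :=
  sInf {x : ℝ | x ∈ Set.range hσ.eigenvalues ∧ x ≠ 0}

/-!
Write `t = ‖ρ - σ‖₁`, `λ = λ_min(σ)` and let `P` be the support projection of `σ`. If `μ` is an
eigenvalue of the Hermitian matrix `ρ - σ`, then `μ²` is an eigenvalue of `(ρ - σ)ᴴ (ρ - σ)`, so
`|μ| ≤ t` and `ρ - σ ≤ t • 1`. Since `ker σ ⊆ ker ρ`, compressing by `P` fixes both `ρ` and `σ`,
whence `ρ - σ = P (ρ - σ) P ≤ t • P ≤ (t / λ) • σ`, i.e. `ρ ≤ (1 + t / λ) • σ`. This bounds `D∞`,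
and the second inequality is `log (1 + x) ≤ x`.
-/

open scoped MatrixOrder

namespace Matrix

variable {n 𝕜 : Type*} [Fintype n] [DecidableEq n] [RCLike 𝕜]

noncomputable def supportProj (A : Matrix n n 𝕜) : Matrix n n 𝕜 :=
  cfc (fun x : ℝ => if x = 0 then 0 else 1) A

lemma isSelfAdjoint_supportProj (A : Matrix n n 𝕜) : IsSelfAdjoint (supportProj A) :=
  cfc_predicate _ A

lemma supportProj_mul_self (A : Matrix n n 𝕜) : supportProj A * supportProj A = supportProj A := by
  rw [supportProj, ← cfc_mul _ _ A (finite_real_spectrum.continuousOn _)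
    (finite_real_spectrum.continuousOn _)]
  exact cfc_congr fun x _ => by split_ifs <;> simp

lemma IsHermitian.mul_supportProj {A : Matrix n n 𝕜} (hA : A.IsHermitian) :
    A * supportProj A = A := calc
  A * supportProj A = cfc (fun x : ℝ => x * if x = 0 then 0 else 1) A := by
    rw [supportProj, cfc_mul _ _ A (finite_real_spectrum.continuousOn _)
      (finite_real_spectrum.continuousOn _), cfc_id' ℝ A hA.isSelfAdjoint]
  _ = cfc (fun x : ℝ => x) A := cfc_congr fun x _ => by split_ifs with h <;> simp [h]
  _ = A := cfc_id' ℝ A hA.isSelfAdjoint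

lemma IsHermitian.smul_supportProj_le {A : Matrix n n 𝕜} (hA : A.IsHermitian) {c : ℝ}
    (hc : ∀ x ∈ spectrum ℝ A, x ≠ 0 → c ≤ x) : c • supportProj A ≤ A := calc
  c • supportProj A = cfc (fun x : ℝ => c • if x = 0 then 0 else 1) A :=
    (cfc_smul c _ A (finite_real_spectrum.continuousOn _)).symm
  _ ≤ cfc (fun x : ℝ => x) A := cfc_mono (fun x hx => by by_cases h : x = 0 <;> simp [h, hc x hx])
    (finite_real_spectrum.continuousOn _) (finite_real_spectrum.continuousOn _)
  _ = A := cfc_id' ℝ A hA.isSelfAdjoint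

lemma mul_eq_zero_of_ker_le {A B M : Matrix n n 𝕜} (hAB : ∀ v, A *ᵥ v = 0 → B *ᵥ v = 0)
    (hAM : A * M = 0) : B * M = 0 :=
  ext_of_mulVec_single fun i => by
    rw [← mulVec_mulVec, hAB _ (by rw [mulVec_mulVec, hAM, zero_mulVec]), zero_mulVec]

lemma IsHermitian.mul_supportProj_of_ker_le {A B : Matrix n n 𝕜} (hA : A.IsHermitian)
    (hAB : ∀ v, A *ᵥ v = 0 → B *ᵥ v = 0) : B * supportProj A = B := by
  have h := mul_eq_zero_of_ker_le hAB (M := 1 - supportProj A) (by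
    rw [Matrix.mul_sub, hA.mul_supportProj, Matrix.mul_one, sub_self])
  rwa [Matrix.mul_sub, Matrix.mul_one, sub_eq_zero, eq_comm] at h

lemma IsHermitian.supportProj_mul_mul_supportProj_of_ker_le {A B : Matrix n n 𝕜}
    (hA : A.IsHermitian) (hB : B.IsHermitian) (hAB : ∀ v, A *ᵥ v = 0 → B *ᵥ v = 0) :
    supportProj A * B * supportProj A = B := by
  have hBP := hA.mul_supportProj_of_ker_le hAB
  have hPB : supportProj A * B = B := by
    simpa [(isSelfAdjoint_supportProj A).star_eq, hB.isSelfAdjoint.star_eq] using congrArg star hBP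
  rw [hPB, hBP]

theorem le_one_add_div_smul_of_ker_le {ρ σ : Matrix n n 𝕜} (hρ : ρ.IsHermitian) (hσ : σ.IsHermitian)
    (hsupp : ∀ v, σ *ᵥ v = 0 → ρ *ᵥ v = 0) {c t : ℝ} (hc : 0 < c)
    (hcσ : ∀ x ∈ spectrum ℝ σ, x ≠ 0 → c ≤ x) (ht : 0 ≤ t)
    (hρσ : ρ - σ ≤ algebraMap ℝ _ t) : ρ ≤ (1 + t / c) • σ := by
  set P := supportProj σ
  have hsupp' : ∀ v, σ *ᵥ v = 0 → (ρ - σ) *ᵥ v = 0 := fun v hv => by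
    rw [sub_mulVec, hsupp v hv, hv, sub_zero]
  have h1 : ρ - σ ≤ t • P := calc
    ρ - σ = P * (ρ - σ) * P :=
      (hσ.supportProj_mul_mul_supportProj_of_ker_le (hρ.sub hσ) hsupp').symm
    _ ≤ P * algebraMap ℝ _ t * P := (isSelfAdjoint_supportProj σ).conjugate_le_conjugate hρσ
    _ = t • P := by
      rw [Algebra.algebraMap_eq_smul_one, Matrix.mul_smul, Matrix.mul_one, Matrix.smul_mul,
        supportProj_mul_self]
  have h2 : t • P ≤ (t / c) • σ := calc
    t • P = (t / c) • (c • P) := by rw [smul_smul, div_mul_cancel₀ t hc.ne']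
    _ ≤ (t / c) • σ :=
      smul_le_smul_of_nonneg_left (hσ.smul_supportProj_le hcσ) (div_nonneg ht hc.le)
  calc ρ = (ρ - σ) + σ := by abel
    _ ≤ (t / c) • σ + σ := add_le_add_left (h1.trans h2) σ
    _ = (1 + t / c) • σ := by rw [add_smul, one_smul, add_comm]

end Matrix

section

variable {d : ℕ}

lemma traceNorm_nonneg (A : Matrix (Fin d) (Fin d) ℂ) : 0 ≤ traceNorm A :=
  Finset.sum_nonneg fun _ _ => Real.sqrt_nonneg _

lemma Matrix.IsHermitian.abs_eigenvalues_le_traceNorm {A : Matrix (Fin d) (Fin d) ℂ}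
    (hA : A.IsHermitian) (j : Fin d) : |hA.eigenvalues j| ≤ traceNorm A := by
  have hAA := isHermitian_conjTranspose_mul_self A
  have hsq : hA.eigenvalues j ^ 2 ∈ spectrum ℝ (Aᴴ * A) := by
    rw [hA.eq, ← sq, ← cfc_pow_id (R := ℝ) A 2 hA.isSelfAdjoint,
      cfc_map_spectrum _ A hA.isSelfAdjoint]
    exact ⟨_, hA.eigenvalues_mem_spectrum_real j, rfl⟩
  obtain ⟨k, hk⟩ := hAA.spectrum_real_eq_range_eigenvalues ▸ hsq
  calc |hA.eigenvalues j| = Real.sqrt (hAA.eigenvalues k) := by rw [hk, Real.sqrt_sq_eq_abs]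
    _ ≤ traceNorm A := Finset.single_le_sum (f := fun i => Real.sqrt (hAA.eigenvalues i))
        (fun _ _ => Real.sqrt_nonneg _) (Finset.mem_univ k)

lemma Matrix.IsHermitian.le_traceNorm {A : Matrix (Fin d) (Fin d) ℂ} (hA : A.IsHermitian) :
    A ≤ algebraMap ℝ _ (traceNorm A) :=
  le_algebraMap_of_spectrum_le fun x hx => by
    obtain ⟨j, rfl⟩ := hA.spectrum_real_eq_range_eigenvalues ▸ hx
    exact (le_abs_self _).trans (hA.abs_eigenvalues_le_traceNorm j)

lemma lambdaMin_eq_sInf {σ : Matrix (Fin d) (Fin d) ℂ} (hσ : σ.IsHermitian) :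
    lambdaMin σ hσ = sInf (spectrum ℝ σ \ {0}) := by
  rw [lambdaMin, hσ.spectrum_real_eq_range_eigenvalues]
  rfl

lemma lambdaMin_le {σ : Matrix (Fin d) (Fin d) ℂ} (hσ : σ.IsHermitian) :
    ∀ x ∈ spectrum ℝ σ, x ≠ 0 → lambdaMin σ hσ ≤ x := fun x hx hx0 => by
  rw [lambdaMin_eq_sInf]
  exact csInf_le (finite_real_spectrum.sdiff.bddBelow) ⟨hx, hx0⟩

lemma lambdaMin_pos {σ : Matrix (Fin d) (Fin d) ℂ} (hσ : σ.PosSemidef) (hσ0 : σ ≠ 0) :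
    0 < lambdaMin σ hσ.1 := by
  obtain ⟨j, hj⟩ := Function.ne_iff.mp (hσ.1.eigenvalues_eq_zero_iff.not.mpr hσ0)
  have hne : (spectrum ℝ σ \ {0}).Nonempty := ⟨_, hσ.1.eigenvalues_mem_spectrum_real j, hj⟩
  obtain ⟨hmem, hne0⟩ := lambdaMin_eq_sInf hσ.1 ▸ hne.csInf_mem finite_real_spectrum.sdiff
  exact lt_of_le_of_ne (spectrum_nonneg_of_nonneg hσ.nonneg hmem) (Ne.symm hne0)

lemma Dmax_le {ρ σ : Matrix (Fin d) (Fin d) ℂ} {l : ℝ} (hl : 0 ≤ l) (h : ρ ≤ Real.exp l • σ) :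
    Dmax ρ σ ≤ l := by
  -- when the set is not bounded below (e.g. for `ρ = 0`), `sInf` takes the junk value `0`
  by_cases hbdd : BddBelow {l : ℝ | (Real.exp l • σ - ρ).PosSemidef}
  · exact csInf_le hbdd h
  · exact (Real.sInf_of_not_bddBelow hbdd).trans_le hl

end

theorem stmt0_general {d : ℕ} (ρ σ : Matrix (Fin d) (Fin d) ℂ)
    (hρ : ρ.PosSemidef) (hσ : σ.PosSemidef) (hσ0 : σ ≠ 0)
    (hsupp : ∀ v : Fin d → ℂ, σ.mulVec v = 0 → ρ.mulVec v = 0) :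
    Dmax ρ σ ≤ Real.log (1 + traceNorm (ρ - σ) / lambdaMin σ hσ.1) ∧
    Real.log (1 + traceNorm (ρ - σ) / lambdaMin σ hσ.1) ≤
      traceNorm (ρ - σ) / lambdaMin σ hσ.1 := by
  set x := traceNorm (ρ - σ) / lambdaMin σ hσ.1
  have hc := lambdaMin_pos hσ hσ0
  have hx : 0 ≤ x := div_nonneg (traceNorm_nonneg _) hc.le
  refine ⟨Dmax_le (Real.log_nonneg (by linarith)) ?_, ?_⟩
  · rw [Real.exp_log (by linarith)]
    exact le_one_add_div_smul_of_ker_le hρ.1 hσ.1 hsupp hc (lambdaMin_le hσ.1)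
      (traceNorm_nonneg _) (hρ.1.sub hσ.1).le_traceNorm
  · linarith [Real.log_le_sub_one_of_pos (show 0 < 1 + x by linarith)]

theorem stmt0 {d : ℕ} (ρ σ : Matrix (Fin d) (Fin d) ℂ)
    (hρ : ρ.PosSemidef) (hσ : σ.PosSemidef) (hρ0 : ρ ≠ 0) (hσ0 : σ ≠ 0)
    (hsupp : ∀ v : Fin d → ℂ, σ.mulVec v = 0 → ρ.mulVec v = 0) :
    Dmax ρ σ ≤ Real.log (1 + traceNorm (ρ - σ) / lambdaMin σ hσ.1) ∧
    Real.log (1 + traceNorm (ρ - σ) / lambdaMin σ hσ.1) ≤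
      traceNorm (ρ - σ) / lambdaMin σ hσ.1 :=
  stmt0_general ρ σ hρ hσ hσ0 hsupp
end

section
/- Let ρ, σ be nonzero positive semidefinite operators on a finite-dimensional Hilbert space ℋ. Then the max-relative entropy satisfies D∞(ρ‖σ) = log max{ (Tr ρτ)/(Tr στ) : τ a density operator on ℋ with supp(τ) ⊆ supp(σ) } (with the convention that the maximum is +∞ if supp(ρ) ⊄ supp(σ)). -/
/-!
If `ρ ≤ e^λ σ`, then `Tr ρτ ≤ e^λ Tr στ` for every state `τ`, since the trace of a product of
positive semidefinite matrices is nonnegative; so the maximal ratio is at most `e^λ` for every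
feasible `λ`. Conversely, if `ρ ≰ e^λ σ`, some `v` has `⟨v, (e^λ σ - ρ) v⟩ < 0`. When
`ker σ ⊆ ker ρ`, adding a vector of `ker σ` does not change this quadratic form, and every vector
is a vector of `range σ` plus one of `ker σ` (range and kernel of a Hermitian matrix are
complementary); so `v` may be taken in `range σ`, and the pure state `|v⟩⟨v| / ⟨v|v⟩` is supported
in `supp σ` with ratio above `e^λ`. If `ker σ ⊄ ker ρ`, no `λ` is feasible and both sides are `⊤`.
-/

open Matrix
open scoped ComplexOrder ENNReal

/-- Max-relative entropy `D∞(ρ‖σ) := inf {λ : ρ ≤ e^λ σ}` (Löwner order), as an extended real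
number (`+∞` if no such `λ` exists). -/
noncomputable def DmaxE {d : ℕ} (ρ σ : Matrix (Fin d) (Fin d) ℂ) : EReal :=
  sInf ((fun l : ℝ => (l : EReal)) '' {l : ℝ | (Real.exp l • σ - ρ).PosSemidef})

theorem ENNReal.ofReal_div_ofReal_le {a b t : ℝ} (ht : 0 ≤ t) (h : a ≤ t * b) :
    ENNReal.ofReal a / ENNReal.ofReal b ≤ ENNReal.ofReal t :=
  ENNReal.div_le_of_le_mul (ENNReal.ofReal_mul ht ▸ ENNReal.ofReal_le_ofReal h)

theorem ENNReal.ofReal_le_ofReal_div {a b t : ℝ} (ht : 0 ≤ t) (hb : 0 ≤ b) (h : t * b < a) :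
    ENNReal.ofReal t ≤ ENNReal.ofReal a / ENNReal.ofReal b := by
  have ha : 0 < a := (mul_nonneg ht hb).trans_lt h
  rw [ENNReal.le_div_iff_mul_le (.inr (ENNReal.ofReal_pos.mpr ha).ne') (.inl ENNReal.ofReal_ne_top),
    ← ENNReal.ofReal_mul ht]
  exact ENNReal.ofReal_le_ofReal h.le

theorem ENNReal.log_ofReal_exp (l : ℝ) : ENNReal.log (ENNReal.ofReal (Real.exp l)) = l := by
  rw [ENNReal.log_ofReal_of_pos (Real.exp_pos l), Real.log_exp]

theorem EReal.sInf_image_coe_eq_log {S : Set ℝ} {s : ℝ≥0∞}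
    (hmem : ∀ l ∈ S, s ≤ ENNReal.ofReal (Real.exp l))
    (hnotMem : ∀ l ∉ S, ENNReal.ofReal (Real.exp l) ≤ s) :
    sInf ((fun l : ℝ => (l : EReal)) '' S) = ENNReal.log s := by
  refine le_antisymm ?_ (le_sInf ?_)
  · by_contra! h
    obtain ⟨x, hsx, hxS⟩ := EReal.exists_between_coe_real h
    by_cases hx : x ∈ S
    · exact (sInf_le (Set.mem_image_of_mem _ hx)).not_gt hxS
    · exact hsx.not_ge
        ((ENNReal.log_ofReal_exp x).symm.trans_le (ENNReal.log_monotone (hnotMem x hx)))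
  · rintro _ ⟨l, hl, rfl⟩
    exact (ENNReal.log_monotone (hmem l hl)).trans_eq (ENNReal.log_ofReal_exp l)

namespace Matrix

variable {n : Type*} [Fintype n]

open scoped MatrixOrder in
theorem PosSemidef.trace_mul_nonneg {A B : Matrix n n ℂ} (hA : A.PosSemidef) (hB : B.PosSemidef) :
    0 ≤ (A * B).trace := by
  classical
  set S := CFC.sqrt B
  have hS : S.PosSemidef := (CFC.sqrt_nonneg B).posSemidef
  have hSS : S * S = B := CFC.sqrt_mul_sqrt_self B hB.nonneg
  calc 0 ≤ (Sᴴ * A * S).trace := (hA.conjTranspose_mul_mul_same S).trace_nonneg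
    _ = (A * B).trace := by rw [hS.isHermitian.eq, trace_mul_cycle, hSS, trace_mul_comm]

theorem IsHermitian.star_mulVec_dotProduct_eq_zero {A : Matrix n n ℂ} (hA : A.IsHermitian)
    (y : n → ℂ) {u : n → ℂ} (hu : A *ᵥ u = 0) : star (A *ᵥ y) ⬝ᵥ u = 0 := by
  rw [star_mulVec, ← dotProduct_mulVec, hA.eq, hu, dotProduct_zero]

theorem IsHermitian.exists_eq_mulVec_add {A : Matrix n n ℂ} (hA : A.IsHermitian) (v : n → ℂ) :
    ∃ y u, A *ᵥ u = 0 ∧ v = A *ᵥ y + u := by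
  have hdisj : Disjoint (LinearMap.range A.mulVecLin) (LinearMap.ker A.mulVecLin) := by
    rw [Submodule.disjoint_def]
    rintro _ ⟨y, rfl⟩ hy
    exact dotProduct_star_self_eq_zero.mp (hA.star_mulVec_dotProduct_eq_zero y hy)
  have htop := Submodule.eq_top_of_disjoint _ _ A.mulVecLin.finrank_range_add_finrank_ker.ge hdisj
  obtain ⟨_, ⟨y, rfl⟩, u, hu, rfl⟩ := Submodule.mem_sup.mp (htop ▸ Submodule.mem_top (x := v))
  exact ⟨y, u, hu, rfl⟩

theorem IsHermitian.star_add_dotProduct_mulVec_add {A : Matrix n n ℂ} (hA : A.IsHermitian)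
    (w : n → ℂ) {u : n → ℂ} (hu : A *ᵥ u = 0) :
    star (w + u) ⬝ᵥ A *ᵥ (w + u) = star w ⬝ᵥ A *ᵥ w := by
  have hcross : star u ⬝ᵥ A *ᵥ w = 0 := by
    rw [dotProduct_mulVec, ← hA.eq, ← star_mulVec, hu, star_zero, zero_dotProduct]
  rw [mulVec_add, hu, add_zero, star_add, add_dotProduct, hcross, add_zero]

def supportedDensityMatrices (σ : Matrix n n ℂ) : Set (Matrix n n ℂ) :=
  {τ | τ.PosSemidef ∧ τ.trace = 1 ∧ ∀ v, σ *ᵥ v = 0 → τ *ᵥ v = 0}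

noncomputable def pureState (w : n → ℂ) : Matrix n n ℂ :=
  (star w ⬝ᵥ w)⁻¹ • vecMulVec w (star w)

theorem trace_mul_pureState (A : Matrix n n ℂ) (w : n → ℂ) :
    (A * pureState w).trace = (star w ⬝ᵥ w)⁻¹ * (star w ⬝ᵥ A *ᵥ w) := by
  rw [pureState, mul_smul_comm, trace_smul, mul_vecMulVec, trace_vecMulVec,
    dotProduct_comm (A *ᵥ w), smul_eq_mul]

theorem pureState_mem_supportedDensityMatrices {σ : Matrix n n ℂ} (hσ : σ.IsHermitian)
    {y : n → ℂ} (hy : σ *ᵥ y ≠ 0) : pureState (σ *ᵥ y) ∈ supportedDensityMatrices σ := by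
  have hnorm : star (σ *ᵥ y) ⬝ᵥ (σ *ᵥ y) ≠ 0 := dotProduct_star_self_eq_zero.not.mpr hy
  have hinv : 0 ≤ (star (σ *ᵥ y) ⬝ᵥ (σ *ᵥ y))⁻¹ := inv_nonneg.mpr (dotProduct_star_self_nonneg _)
  refine ⟨(posSemidef_vecMulVec_self_star _).smul hinv, ?_, fun u hu => ?_⟩
  · rw [pureState, trace_smul, trace_vecMulVec, dotProduct_comm (σ *ᵥ y), smul_eq_mul,
      inv_mul_cancel₀ hnorm]
  · rw [pureState, smul_mulVec, vecMulVec_mulVec, hσ.star_mulVec_dotProduct_eq_zero y hu]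
    simp

theorem IsHermitian.exists_re_trace_mul_neg {M σ : Matrix n n ℂ} (hM : M.IsHermitian)
    (hσ : σ.IsHermitian) (hker : ∀ v, σ *ᵥ v = 0 → M *ᵥ v = 0) (hM' : ¬ M.PosSemidef) :
    ∃ τ ∈ supportedDensityMatrices σ, (M * τ).trace.re < 0 := by
  obtain ⟨v, hv⟩ : ∃ v, ¬ 0 ≤ star v ⬝ᵥ M *ᵥ v := by
    by_contra! h
    exact hM' (.of_dotProduct_mulVec_nonneg hM h)
  obtain ⟨y, u, hu, rfl⟩ := hσ.exists_eq_mulVec_add v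
  rw [hM.star_add_dotProduct_mulVec_add _ (hker u hu)] at hv
  have hy : σ *ᵥ y ≠ 0 := fun h => hv (by simp [h])
  have hneg : star (σ *ᵥ y) ⬝ᵥ M *ᵥ (σ *ᵥ y) < 0 := by
    have him := hM.im_star_dotProduct_mulVec_self (σ *ᵥ y)
    refine Complex.lt_def.mpr ⟨not_le.mp fun h => hv (Complex.le_def.mpr ⟨h, ?_⟩), ?_⟩ <;>
      simpa [eq_comm] using him
  have hpos : 0 < (star (σ *ᵥ y) ⬝ᵥ (σ *ᵥ y))⁻¹ := inv_pos.mpr <|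
    (dotProduct_star_self_nonneg _).lt_of_ne' (dotProduct_star_self_eq_zero.not.mpr hy)
  refine ⟨_, pureState_mem_supportedDensityMatrices hσ hy, ?_⟩
  rw [trace_mul_pureState]
  exact (Complex.lt_def.mp (mul_neg_of_pos_of_neg hpos hneg)).1

theorem re_trace_smul_sub_mul (t : ℝ) (σ ρ τ : Matrix n n ℂ) :
    ((t • σ - ρ) * τ).trace.re = t * (σ * τ).trace.re - (ρ * τ).trace.re := by
  simp [Matrix.sub_mul, trace_sub, Matrix.smul_mul, trace_smul]

theorem not_posSemidef_smul_sub {ρ σ : Matrix n n ℂ} (hρ : ρ.PosSemidef) {v : n → ℂ}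
    (hσv : σ *ᵥ v = 0) (hρv : ρ *ᵥ v ≠ 0) (t : ℝ) : ¬ (t • σ - ρ).PosSemidef := by
  intro h
  have hle : star v ⬝ᵥ ρ *ᵥ v ≤ 0 := by
    simpa [sub_mulVec, smul_mulVec, hσv] using h.dotProduct_mulVec_nonneg v
  exact hρv ((hρ.dotProduct_mulVec_zero_iff v).mp (hle.antisymm (hρ.dotProduct_mulVec_nonneg v)))

theorem ofReal_ratio_le_of_posSemidef_smul_sub {ρ σ τ : Matrix n n ℂ} {t : ℝ} (ht : 0 ≤ t)
    (h : (t • σ - ρ).PosSemidef) (hτ : τ.PosSemidef) :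
    ENNReal.ofReal (ρ * τ).trace.re / ENNReal.ofReal (σ * τ).trace.re ≤ ENNReal.ofReal t := by
  have hnonneg := (Complex.le_def.mp (h.trace_mul_nonneg hτ)).1
  rw [Complex.zero_re, re_trace_smul_sub_mul] at hnonneg
  exact ENNReal.ofReal_div_ofReal_le ht (by linarith)

theorem exists_ofReal_le_ratio_of_not_posSemidef_smul_sub {ρ σ : Matrix n n ℂ}
    (hρ : ρ.IsHermitian) (hσ : σ.PosSemidef) (hsupp : ∀ v, σ *ᵥ v = 0 → ρ *ᵥ v = 0) {t : ℝ}
    (ht : 0 ≤ t) (h : ¬ (t • σ - ρ).PosSemidef) :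
    ∃ τ ∈ supportedDensityMatrices σ,
      ENNReal.ofReal t ≤ ENNReal.ofReal (ρ * τ).trace.re / ENNReal.ofReal (σ * τ).trace.re := by
  have hker (v : n → ℂ) (hv : σ *ᵥ v = 0) : (t • σ - ρ) *ᵥ v = 0 := by
    simp [sub_mulVec, smul_mulVec, hv, hsupp v hv]
  obtain ⟨τ, hτ, hneg⟩ :=
    ((hσ.smul ht).isHermitian.sub hρ).exists_re_trace_mul_neg hσ.isHermitian hker h
  rw [re_trace_smul_sub_mul] at hneg
  refine ⟨τ, hτ, ENNReal.ofReal_le_ofReal_div ht ?_ (by linarith)⟩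
  exact (Complex.le_def.mp (hσ.trace_mul_nonneg hτ.1)).1

end Matrix

open Classical in
theorem stmt2_general {d : ℕ} (ρ σ : Matrix (Fin d) (Fin d) ℂ)
    (hρ : ρ.PosSemidef) (hσ : σ.PosSemidef) :
    DmaxE ρ σ =
      if ∀ v : Fin d → ℂ, σ.mulVec v = 0 → ρ.mulVec v = 0 then
        ENNReal.log (⨆ τ ∈ {τ : Matrix (Fin d) (Fin d) ℂ | τ.PosSemidef ∧ τ.trace = 1 ∧
            ∀ v : Fin d → ℂ, σ.mulVec v = 0 → τ.mulVec v = 0},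
          ENNReal.ofReal ((ρ * τ).trace.re) / ENNReal.ofReal ((σ * τ).trace.re))
      else (⊤ : EReal) := by
  rw [DmaxE]
  split_ifs with hsupp
  · refine EReal.sInf_image_coe_eq_log (fun l hl => iSup₂_le fun τ hτ => ?_) fun l hl => ?_
    · exact ofReal_ratio_le_of_posSemidef_smul_sub (Real.exp_pos l).le hl hτ.1
    · obtain ⟨τ, hτ, hle⟩ := exists_ofReal_le_ratio_of_not_posSemidef_smul_sub hρ.isHermitian hσ
        hsupp (Real.exp_pos l).le hl
      exact le_iSup₂_of_le (f := fun τ _ => _) τ hτ hle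
  · push Not at hsupp
    obtain ⟨v, hσv, hρv⟩ := hsupp
    simp [not_posSemidef_smul_sub hρ hσv hρv]

open Classical in
/-- The max-relative entropy equals the logarithm of the maximal ratio `Tr ρτ / Tr στ` over
density operators `τ` supported in the support of `σ` (the ratio being taken in `ℝ≥0∞`, so that
`a / 0 = ∞` for `a ≠ 0`), with the convention that it is `+∞` if `supp ρ ⊄ supp σ`. -/
theorem stmt2 {d : ℕ} (ρ σ : Matrix (Fin d) (Fin d) ℂ)
    (hρ : ρ.PosSemidef) (hσ : σ.PosSemidef) (hρ0 : ρ ≠ 0) (hσ0 : σ ≠ 0) :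
    DmaxE ρ σ =
      if ∀ v : Fin d → ℂ, σ.mulVec v = 0 → ρ.mulVec v = 0 then
        ENNReal.log (⨆ τ ∈ {τ : Matrix (Fin d) (Fin d) ℂ | τ.PosSemidef ∧ τ.trace = 1 ∧
            ∀ v : Fin d → ℂ, σ.mulVec v = 0 → τ.mulVec v = 0},
          ENNReal.ofReal ((ρ * τ).trace.re) / ENNReal.ofReal ((σ * τ).trace.re))
      else (⊤ : EReal) :=
  stmt2_general ρ σ hρ hσ
end

section
/- Let R be a subset of density operators on a finite-dimensional Hilbert space ℋ such that only countably many of the sets R_P := {ρ ∈ R : supp-projection(ρ) = P}, where P ranges over orthogonal projections on ℋ, are nonempty. Then there exists a countable subset R̃ ⊆ R that is max-relative-entropy dense in R, i.e., for every ρ ∈ R and ε > 0 there exists ρ̃ ∈ R̃ with D∞(ρ̃‖ρ) < ε. -/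
open Matrix
open scoped ComplexOrder

/-- The support of a matrix, i.e. the range of the associated linear map. -/
noncomputable def supp {d : ℕ} (ρ : Matrix (Fin d) (Fin d) ℂ) :
    Submodule ℂ (Fin d → ℂ) :=
  LinearMap.range (Matrix.toLin' ρ)

/-!
A positive semidefinite `ρ` dominates a multiple of its support projection: `c • P ≤ ρ`, where
`P = 1_{t ≠ 0}(ρ)` and `c > 0` is the least nonzero eigenvalue. If `σ` is Hermitian with
`supp σ ≤ supp ρ`, then `σ - ρ = P (σ - ρ) P ≤ ‖σ - ρ‖ • P ≤ (‖σ - ρ‖ / c) • ρ`, so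
`D∞(σ‖ρ) ≤ log (1 + ‖σ - ρ‖ / c) ≤ ‖σ - ρ‖ / c`. Hence the union of countable dense subsets of the
countably many classes `{ρ ∈ R | supp ρ = V}` is `D∞`-dense in `R`.
-/

section CStarAlgebra

variable {A : Type*} [CStarAlgebra A] [PartialOrder A] [StarOrderedRing A]

lemma exists_isStarProjection_smul_le {a : A} (ha : 0 ≤ a) (hspec : (spectrum ℝ a).Finite) :
    ∃ p : A, IsStarProjection p ∧ p * a = a ∧ ∃ c : ℝ, 0 < c ∧ c • p ≤ a := by
  obtain ⟨c, hc, hc_le⟩ : ∃ c : ℝ, 0 < c ∧ ∀ t ∈ spectrum ℝ a, t ≠ 0 → c ≤ t := by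
    obtain ⟨ε, hε, hball⟩ :=
      Metric.isOpen_iff.mp (hspec.sdiff (t := {0})).isClosed.isOpen_compl (0 : ℝ) (by simp)
    refine ⟨ε, hε, fun t ht ht0 => ?_⟩
    have : t ∉ Metric.ball 0 ε := fun h => hball h ⟨ht, ht0⟩
    simpa [abs_of_nonneg (spectrum_nonneg_of_nonneg ha ht)] using this
  set f : ℝ → ℝ := fun t => if t = 0 then 0 else 1
  have hf : ContinuousOn f (spectrum ℝ a) := hspec.continuousOn f
  refine ⟨cfc f a, ⟨?_, cfc_predicate f a⟩, ?_, c, hc, ?_⟩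
  · rw [IsIdempotentElem, ← cfc_mul f f a]
    exact cfc_congr fun t _ => by simp only [f]; split_ifs <;> simp
  · calc cfc f a * a = cfc (fun t => f t * t) a := by rw [cfc_mul f (fun t => t) a, cfc_id' ℝ a]
      _ = cfc (fun t => t) a := cfc_congr fun t _ => by simp only [f]; split_ifs <;> simp_all
      _ = a := cfc_id' ℝ a
  · rw [← cfc_smul c f a]
    conv_rhs => rw [← cfc_id' ℝ a]
    refine cfc_mono fun t ht => ?_
    simp only [f]
    split_ifs with h
    · simp [h]
    · simpa using hc_le t ht h

lemma IsStarProjection.le_one_add_norm_sub_div_smul {a b p : A} (hp : IsStarProjection p)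
    (hpa : p * a = a) (hpb : p * b = b) (ha : IsSelfAdjoint a) (hb : IsSelfAdjoint b) {c : ℝ}
    (hc : 0 < c) (hcp : c • p ≤ a) : b ≤ (1 + ‖b - a‖ / c) • a := by
  set δ := b - a
  have hap : a * p = a := by
    simpa [ha.star_eq, hp.isSelfAdjoint.star_eq] using congrArg star hpa
  have hbp : b * p = b := by
    simpa [hb.star_eq, hp.isSelfAdjoint.star_eq] using congrArg star hpb
  have hδ : star p * δ * p = δ := by
    simp only [δ, hp.isSelfAdjoint.star_eq, mul_sub, sub_mul, hpa, hpb, hap, hbp]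
  have h1 : δ ≤ ‖δ‖ • p := by
    have := star_left_conjugate_le_conjugate ((hb.sub ha).le_algebraMap_norm_self) p
    rwa [hδ, Algebra.algebraMap_eq_smul_one, mul_smul_comm, mul_one, smul_mul_assoc,
      hp.isSelfAdjoint.star_eq, hp.isIdempotentElem.eq] at this
  have h2 : ‖δ‖ • p ≤ (‖δ‖ / c) • a := by
    calc ‖δ‖ • p = (‖δ‖ / c) • (c • p) := by rw [smul_smul, div_mul_cancel₀ _ hc.ne']
      _ ≤ (‖δ‖ / c) • a := smul_le_smul_of_nonneg_left hcp (by positivity)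
  calc b = a + δ := (add_sub_cancel a b).symm
    _ ≤ a + (‖δ‖ / c) • a := add_le_add_right (h1.trans h2) a
    _ = (1 + ‖δ‖ / c) • a := by rw [add_smul, one_smul]

end CStarAlgebra

open TopologicalSpace
open scoped MatrixOrder Matrix.Norms.L2Operator

lemma DmaxE_le_of_posSemidef {d : ℕ} {ρ σ : Matrix (Fin d) (Fin d) ℂ} {l : ℝ}
    (h : (Real.exp l • σ - ρ).PosSemidef) : DmaxE ρ σ ≤ l :=
  sInf_le ⟨l, h, rfl⟩

lemma mul_eq_self_of_supp_le {d : ℕ} {p a b : Matrix (Fin d) (Fin d) ℂ} (hpa : p * a = a)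
    (h : supp b ≤ supp a) : p * b = b := by
  refine toLin'.injective (LinearMap.ext fun x => ?_)
  obtain ⟨y, hy⟩ := h ⟨x, rfl⟩
  rw [toLin'_mul, LinearMap.comp_apply, ← hy, ← LinearMap.comp_apply, ← toLin'_mul, hpa]

lemma exists_DmaxE_le_norm_sub_div {d : ℕ} {ρ : Matrix (Fin d) (Fin d) ℂ} (hρ : ρ.PosSemidef) :
    ∃ c : ℝ, 0 < c ∧ ∀ σ : Matrix (Fin d) (Fin d) ℂ, σ.IsHermitian → supp σ ≤ supp ρ →
      DmaxE σ ρ ≤ ((‖σ - ρ‖ / c : ℝ) : EReal) := by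
  obtain ⟨p, hp, hpρ, c, hc, hcp⟩ :=
    exists_isStarProjection_smul_le (nonneg_iff_posSemidef.mpr hρ) finite_real_spectrum
  refine ⟨c, hc, fun σ hσ hsupp => ?_⟩
  have hle :=
    hp.le_one_add_norm_sub_div_smul hpρ (mul_eq_self_of_supp_le hpρ hsupp) hρ.1 hσ hc hcp
  have ht : 0 < 1 + ‖σ - ρ‖ / c := by positivity
  calc DmaxE σ ρ ≤ ((Real.log (1 + ‖σ - ρ‖ / c) : ℝ) : EReal) :=
        DmaxE_le_of_posSemidef (by rwa [Real.exp_log ht, ← le_iff])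
    _ ≤ ((‖σ - ρ‖ / c : ℝ) : EReal) := by
        exact_mod_cast (Real.log_le_sub_one_of_pos ht).trans (by simp)

theorem stmt3 {d : ℕ} (R : Set (Matrix (Fin d) (Fin d) ℂ))
    (hR : ∀ ρ ∈ R, ρ.PosSemidef ∧ ρ.trace = 1)
    (hcount : Set.Countable {V : Submodule ℂ (Fin d → ℂ) | ∃ ρ ∈ R, supp ρ = V}) :
    ∃ Rt ⊆ R, Rt.Countable ∧
      ∀ ρ ∈ R, ∀ ε : ℝ, 0 < ε → ∃ ρt ∈ Rt, DmaxE ρt ρ < (ε : EReal) := by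
  choose D hDsub hDcount hDdense using fun V : Submodule ℂ (Fin d → ℂ) =>
    (IsSeparable.of_separableSpace {ρ ∈ R | supp ρ = V}).exists_countable_dense_subset
  refine ⟨⋃ V ∈ {V | ∃ ρ ∈ R, supp ρ = V}, D V,
    Set.iUnion₂_subset fun V _ => (hDsub V).trans (Set.sep_subset _ _),
    hcount.biUnion fun V _ => hDcount V, fun ρ hρ ε hε => ?_⟩
  obtain ⟨c, hc, hDmax⟩ := exists_DmaxE_le_norm_sub_div (hR ρ hρ).1
  obtain ⟨σ, hσD, hσ⟩ :=
    Metric.mem_closure_iff.mp (hDdense (supp ρ) ⟨hρ, rfl⟩) (c * ε) (by positivity)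
  obtain ⟨hσR, hσsupp⟩ := hDsub _ hσD
  refine ⟨σ, Set.mem_biUnion ⟨ρ, hρ, rfl⟩ hσD, ?_⟩
  calc DmaxE σ ρ ≤ ((‖σ - ρ‖ / c : ℝ) : EReal) := hDmax σ (hR σ hσR).1.1 hσsupp.le
    _ < (ε : EReal) := by
        rw [dist_comm, dist_eq_norm] at hσ
        exact_mod_cast (div_lt_iff₀' hc).mpr hσ
end

section
/- Let R be a set of pairwise commuting density operators on a finite-dimensional Hilbert space (equivalently, a set of probability distributions on a finite set X). Then R contains a countable max-relative-entropy dense subset, i.e., a countable R̃ ⊆ R such that for all ρ ∈ R and ε > 0 there is ρ̃ ∈ R̃ with D∞(ρ̃‖ρ) < ε. -/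
/-- Classical max-relative entropy `D∞(p‖q) := inf {λ : p ≤ e^λ q}` (pointwise), as an
extended real number (`+∞` if no such `λ` exists). -/
noncomputable def DmaxC {X : Type*} (p q : X → ℝ) : EReal :=
  sInf ((fun l : ℝ => (l : EReal)) '' {l : ℝ | ∀ x, p x ≤ Real.exp l * q x})

/-- Any set of probability distributions on a finite set (equivalently, of pairwise commuting
density operators) contains a countable max-relative-entropy dense subset. -/
theorem stmt5 {X : Type*} [Fintype X] (R : Set (X → ℝ))
    (hR : ∀ p ∈ R, (∀ x, 0 ≤ p x) ∧ ∑ x, p x = 1) :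
    ∃ Rt ⊆ R, Rt.Countable ∧
      ∀ p ∈ R, ∀ ε : ℝ, 0 < ε → ∃ pt ∈ Rt, DmaxC pt p < (ε : EReal) := by
  classical
  set Φ : (X → ℝ) → (X → ℝ × ℝ) := fun p x =>
    ((if p x = 0 then (0:ℝ) else 1), Real.log (p x)) with hΦ
  set s : Set (X → ℝ × ℝ) := Φ '' R with hs
  obtain ⟨t, htc, htd⟩ := TopologicalSpace.exists_countable_dense (↥s)
  -- choice of preimages
  have hpre : ∀ z : ↥s, ∃ p, p ∈ R ∧ Φ p = (z : X → ℝ × ℝ) := fun z => by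
    obtain ⟨p, hp, hpz⟩ := z.2
    exact ⟨p, hp, hpz⟩
  choose f hfR hfΦ using hpre
  refine ⟨f '' t, ?_, (htc.image f), ?_⟩
  · rintro q ⟨z, _, rfl⟩; exact hfR z
  intro p hp ε hε
  have hε' : 0 < min ε 1 := lt_min hε one_pos
  have hzs : Φ p ∈ s := ⟨p, hp, rfl⟩
  have hz : (⟨Φ p, hzs⟩ : ↥s) ∈ closure t := htd _
  rw [Metric.mem_closure_iff] at hz
  obtain ⟨y, hyt, hdy⟩ := hz (min ε 1) hε'
  refine ⟨f y, ⟨y, hyt, rfl⟩, ?_⟩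
  set l : ℝ := dist (Φ (f y)) (Φ p) with hl
  have hld : l < min ε 1 := by
    rw [hl, hfΦ y]
    simpa [Subtype.dist_eq, dist_comm] using hdy
  have key : ∀ x, f y x ≤ Real.exp l * p x := by
    intro x
    have hx : dist (Φ (f y) x) (Φ p x) ≤ l := dist_le_pi_dist _ _ x
    rw [Prod.dist_eq, max_le_iff] at hx
    obtain ⟨h1, h2⟩ := hx
    by_cases hpx : p x = 0
    · -- then f y x = 0 too
      by_cases hqx : f y x = 0
      · simp [hqx, hpx]
      · exfalso
        have : dist (1:ℝ) 0 ≤ l := by simpa [hΦ, hpx, hqx] using h1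
        have h1l : (1:ℝ) ≤ l := by simpa [Real.dist_eq] using this
        have : (1:ℝ) < 1 := lt_of_le_of_lt h1l (lt_of_lt_of_le hld (min_le_right _ _))
        exact lt_irrefl _ this
    · have hppos : 0 < p x := lt_of_le_of_ne ((hR p hp).1 x) (Ne.symm hpx)
      by_cases hqx : f y x = 0
      · rw [hqx]; positivity
      · have hqpos : 0 < f y x := lt_of_le_of_ne ((hR _ (hfR y)).1 x) (Ne.symm hqx)
        have hlog : Real.log (f y x) - Real.log (p x) ≤ l := by
          have : |Real.log (f y x) - Real.log (p x)| ≤ l := by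
            simpa [hΦ, Real.dist_eq] using h2
          exact (abs_le.mp this).2
        calc f y x = Real.exp (Real.log (f y x)) := (Real.exp_log hqpos).symm
          _ ≤ Real.exp (l + Real.log (p x)) := by
              apply Real.exp_le_exp.mpr; linarith
          _ = Real.exp l * p x := by rw [Real.exp_add, Real.exp_log hppos]
  have hle : DmaxC (f y) p ≤ (l : EReal) := sInf_le ⟨l, key, rfl⟩
  exact lt_of_le_of_lt hle (by
    exact_mod_cast lt_of_lt_of_le hld (min_le_left _ _))
end

section
/- Let ψ : [1, ∞) → ℝ satisfy ψ(1) = 0 and suppose α ↦ ψ(α)/(α−1) is monotone increasing on (1, ∞). Define Ψ(c) := sup_{α ≥ 1} {cα − ψ(α)} and Ψ⁻(c) := Ψ(c) − c = sup_{α ≥ 1} {c(α−1) − ψ(α)}, and let D₁⁺ := inf_{α>1} ψ(α)/(α−1). Then for every c ∈ ℝ one has Ψ(c) ≥ c and Ψ⁻(c) ≥ 0, and these inequalities are strict if and only if c > D₁⁺. -/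
open Set

/-- Legendre–Fenchel transform of `ψ` restricted to `[1,∞)`:  `Ψ(c) = sup_{α≥1} {cα − ψ(α)}`. -/
noncomputable def PsiE (ψ : ℝ → ℝ) (c : ℝ) : EReal :=
  ⨆ α ∈ Set.Ici (1 : ℝ), ((c * α - ψ α : ℝ) : EReal)

/-- Shifted transform `Ψ⁻(c) = sup_{α≥1} {c(α−1) − ψ(α)} = Ψ(c) − c`. -/
noncomputable def PsimE (ψ : ℝ → ℝ) (c : ℝ) : EReal :=
  ⨆ α ∈ Set.Ici (1 : ℝ), ((c * (α - 1) - ψ α : ℝ) : EReal)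

/-- `D₁⁺ := inf_{α>1} ψ(α)/(α−1)` (possibly `−∞`). -/
noncomputable def D1E (ψ : ℝ → ℝ) : EReal :=
  ⨅ α ∈ Set.Ioi (1 : ℝ), ((ψ α / (α - 1) : ℝ) : EReal)

/-!
The term `α = 1` of both suprema is `c`, resp. `0`, since `ψ 1 = 0`; for `α > 1` the term
`c (α - 1) - ψ α` is positive exactly when `ψ α / (α - 1) < c`.
-/

lemma EReal.coe_lt_biSup_coe_iff {ι : Type*} (s : Set ι) (f : ι → ℝ) (a : ℝ) :
    (a : EReal) < ⨆ i ∈ s, (f i : EReal) ↔ ∃ i ∈ s, a < f i := by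
  simp only [lt_iSup_iff, EReal.coe_lt_coe_iff, exists_prop]

lemma D1E_lt_iff (ψ : ℝ → ℝ) (c : ℝ) :
    D1E ψ < (c : EReal) ↔ ∃ α, 1 < α ∧ ψ α / (α - 1) < c := by
  simp only [D1E, iInf_lt_iff, EReal.coe_lt_coe_iff, mem_Ioi, exists_prop]

section

variable {ψ : ℝ → ℝ} (c : ℝ)

lemma coe_le_PsiE (hψ1 : ψ 1 = 0) : (c : EReal) ≤ PsiE ψ c :=
  le_iSup₂_of_le (f := fun α (_ : α ∈ Ici (1 : ℝ)) => ((c * α - ψ α : ℝ) : EReal))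
    1 self_mem_Ici (by simp [hψ1])

lemma zero_le_PsimE (hψ1 : ψ 1 = 0) : (0 : EReal) ≤ PsimE ψ c :=
  le_iSup₂_of_le (f := fun α (_ : α ∈ Ici (1 : ℝ)) => ((c * (α - 1) - ψ α : ℝ) : EReal))
    1 self_mem_Ici (by simp [hψ1])

lemma coe_lt_PsiE_iff_zero_lt_PsimE : (c : EReal) < PsiE ψ c ↔ 0 < PsimE ψ c := by
  rw [PsiE, PsimE, ← EReal.coe_zero, EReal.coe_lt_biSup_coe_iff, EReal.coe_lt_biSup_coe_iff]
  exact exists_congr fun α => and_congr_right fun _ => by constructor <;> intro h <;> linarith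

lemma zero_lt_PsimE_iff (hψ1 : ψ 1 = 0) : 0 < PsimE ψ c ↔ D1E ψ < c := by
  rw [D1E_lt_iff, PsimE, ← EReal.coe_zero, EReal.coe_lt_biSup_coe_iff]
  constructor
  · rintro ⟨α, hα, h⟩
    have hα1 : 1 < α := lt_of_le_of_ne hα (by rintro rfl; simp [hψ1] at h)
    exact ⟨α, hα1, by rw [div_lt_iff₀ (sub_pos.2 hα1)]; linarith⟩
  · rintro ⟨α, hα1, h⟩
    rw [div_lt_iff₀ (sub_pos.2 hα1)] at h
    exact ⟨α, mem_Ici.2 hα1.le, by linarith⟩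

end

theorem stmt9_general (ψ : ℝ → ℝ) (hψ1 : ψ 1 = 0) :
    ∀ c : ℝ,
      (c : EReal) ≤ PsiE ψ c ∧ (0 : EReal) ≤ PsimE ψ c ∧
      ((c : EReal) < PsiE ψ c ↔ D1E ψ < (c : EReal)) ∧
      ((0 : EReal) < PsimE ψ c ↔ D1E ψ < (c : EReal)) := fun c =>
  ⟨coe_le_PsiE c hψ1, zero_le_PsimE c hψ1,
    (coe_lt_PsiE_iff_zero_lt_PsimE c).trans (zero_lt_PsimE_iff c hψ1), zero_lt_PsimE_iff c hψ1⟩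

theorem stmt9 (ψ : ℝ → ℝ) (hψ1 : ψ 1 = 0)
    (hmono : MonotoneOn (fun α => ψ α / (α - 1)) (Set.Ioi (1 : ℝ))) :
    ∀ c : ℝ,
      (c : EReal) ≤ PsiE ψ c ∧ (0 : EReal) ≤ PsimE ψ c ∧
      ((c : EReal) < PsiE ψ c ↔ D1E ψ < (c : EReal)) ∧
      ((0 : EReal) < PsimE ψ c ↔ D1E ψ < (c : EReal)) :=
  stmt9_general ψ hψ1
end

section
/- Let ψ : [1, ∞) → ℝ satisfy ψ(1) = 0 and α ↦ ψ(α)/(α−1) monotone increasing, and set D∞ := lim_{α→∞} ψ(α)/(α−1) and Ψ⁻(c) := sup_{α ≥ 1} {c(α−1) − ψ(α)}. If c > D∞ then Ψ⁻(c) = +∞, and if D₁⁺ := inf_{α>1} ψ(α)/(α−1) > −∞ and c < D∞ then Ψ⁻(c) is finite; in fact Ψ⁻(c) ≤ (α_{c,max} − 1)(c − D₁⁺) where α_{c,max} := sup{α > 1 : ψ(α)/(α−1) < c}. -/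
open Set

/-- `D∞ := lim_{α→∞} ψ(α)/(α−1)`, which equals the supremum by monotonicity. -/
noncomputable def DinfE (ψ : ℝ → ℝ) : EReal :=
  ⨆ α ∈ Set.Ioi (1 : ℝ), ((ψ α / (α - 1) : ℝ) : EReal)

/-!
Writing `c (α - 1) - ψ α = (α - 1) (c - ψ α / (α - 1))`, every term of `Ψ⁻(c)` is the length
`α - 1` times the gap between `c` and the slope `ψ α / (α - 1)`. If `c > D∞` the gap is bounded
below by a positive constant, so the terms are unbounded. If `c < D∞`, monotonicity confines the
`α` with positive gap to a bounded interval `(1, α_{c,max}]`, and there the gap is at most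
`c - D₁⁺`.
-/

lemma mul_sub_eq_mul_sub_div (c a x : ℝ) (ha : a ≠ 0) : c * a - x = a * (c - x / a) := by
  field_simp

section

variable {ψ : ℝ → ℝ} {c : ℝ}

lemma coe_le_PsimE {α : ℝ} (hα : 1 ≤ α) : ((c * (α - 1) - ψ α : ℝ) : EReal) ≤ PsimE ψ c :=
  le_iSup₂ (f := fun α (_ : α ∈ Ici (1 : ℝ)) => ((c * (α - 1) - ψ α : ℝ) : EReal)) α hα

lemma coe_le_DinfE {α : ℝ} (hα : 1 < α) : ((ψ α / (α - 1) : ℝ) : EReal) ≤ DinfE ψ :=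
  le_iSup₂ (f := fun α (_ : α ∈ Ioi (1 : ℝ)) => ((ψ α / (α - 1) : ℝ) : EReal)) α hα

lemma coe_lt_DinfE_iff : (c : EReal) < DinfE ψ ↔ ∃ α, 1 < α ∧ c < ψ α / (α - 1) := by
  rw [DinfE, lt_biSup_iff]
  simp only [mem_Ioi, EReal.coe_lt_coe_iff]

theorem PsimE_eq_top_of_DinfE_lt (h : DinfE ψ < c) : PsimE ψ c = ⊤ := by
  obtain ⟨d, hDd, hdc⟩ := EReal.lt_iff_exists_real_btwn.mp h
  have hcd : 0 < c - (d : ℝ) := sub_pos.mpr (EReal.coe_lt_coe_iff.mp hdc)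
  rw [EReal.eq_top_iff_forall_lt]
  intro b
  set α : ℝ := 1 + (|b| + 1) / (c - d)
  have hα1 : 0 < α - 1 := by simp only [α, add_sub_cancel_left]; positivity
  have hslope : ψ α / (α - 1) ≤ d :=
    EReal.coe_le_coe_iff.mp ((coe_le_DinfE (by linarith)).trans hDd.le)
  have hterm : b < c * (α - 1) - ψ α :=
    calc b < |b| + 1 := by linarith [le_abs_self b]
      _ = (α - 1) * (c - d) := by simp only [α, add_sub_cancel_left]; field_simp
      _ ≤ (α - 1) * (c - ψ α / (α - 1)) := by gcongr
      _ = c * (α - 1) - ψ α := (mul_sub_eq_mul_sub_div c _ _ hα1.ne').symm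
  exact (EReal.coe_lt_coe_iff.mpr hterm).trans_le (coe_le_PsimE (by linarith))

lemma bddAbove_setOf_slope_lt (hmono : MonotoneOn (fun α => ψ α / (α - 1)) (Ioi (1 : ℝ)))
    (hc : (c : EReal) < DinfE ψ) : BddAbove {α : ℝ | 1 < α ∧ ψ α / (α - 1) < c} := by
  obtain ⟨α₁, hα₁, hcα₁⟩ := coe_lt_DinfE_iff.mp hc
  refine ⟨α₁, fun β ⟨hβ, hβc⟩ => ?_⟩
  by_contra! hβα₁
  exact (hmono hα₁ (hα₁.trans hβα₁) hβα₁.le).not_gt (hβc.trans hcα₁)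

section Bound

variable (hbdd : BddBelow ((fun α => ψ α / (α - 1)) '' Ioi (1 : ℝ)))
  (hA : BddAbove {α : ℝ | 1 < α ∧ ψ α / (α - 1) < c})
include hbdd hA

/-- If no slope lies below `c`, then `sSup ∅ = 0` and the bound reads `0 ≤ D₁⁺ - c`. -/
lemma sSup_sub_one_mul_sub_sInf_nonneg :
    0 ≤ (sSup {α : ℝ | 1 < α ∧ ψ α / (α - 1) < c} - 1) *
      (c - sInf ((fun α => ψ α / (α - 1)) '' Ioi (1 : ℝ))) := by
  rcases eq_empty_or_nonempty {α : ℝ | 1 < α ∧ ψ α / (α - 1) < c} with hempty | ⟨β, hβ⟩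
  · have hcm : c ≤ sInf ((fun α => ψ α / (α - 1)) '' Ioi (1 : ℝ)) := by
      refine le_csInf ((nonempty_Ioi).image _) ?_
      rintro _ ⟨α, hα, rfl⟩
      by_contra! hlt
      exact hempty.subset ⟨hα, hlt⟩
    rw [hempty, Real.sSup_empty]
    linarith
  · have hβs := le_csSup hA hβ
    have hmβ := csInf_le hbdd (mem_image_of_mem _ hβ.1)
    nlinarith [hβ.1, hβ.2]

lemma sub_le_sSup_sub_one_mul_sub_sInf (hψ1 : ψ 1 = 0) {α : ℝ} (hα : 1 ≤ α) :
    c * (α - 1) - ψ α ≤ (sSup {α : ℝ | 1 < α ∧ ψ α / (α - 1) < c} - 1) *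
      (c - sInf ((fun α => ψ α / (α - 1)) '' Ioi (1 : ℝ))) := by
  have hnonneg := sSup_sub_one_mul_sub_sInf_nonneg hbdd hA
  rcases hα.eq_or_lt with rfl | hα1
  · simpa [hψ1] using hnonneg
  rw [mul_sub_eq_mul_sub_div c _ _ (sub_pos.mpr hα1).ne']
  rcases lt_or_ge (ψ α / (α - 1)) c with hlt | hge
  · have hαs : α ≤ sSup {α : ℝ | 1 < α ∧ ψ α / (α - 1) < c} := le_csSup hA ⟨hα1, hlt⟩
    have hmα := csInf_le hbdd (mem_image_of_mem _ (mem_Ioi.mpr hα1))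
    gcongr
    linarith
  · nlinarith

end Bound

theorem PsimE_le_of_lt_DinfE (hψ1 : ψ 1 = 0)
    (hmono : MonotoneOn (fun α => ψ α / (α - 1)) (Ioi (1 : ℝ)))
    (hbdd : BddBelow ((fun α => ψ α / (α - 1)) '' Ioi (1 : ℝ))) (hc : (c : EReal) < DinfE ψ) :
    PsimE ψ c ≤ (((sSup {α : ℝ | 1 < α ∧ ψ α / (α - 1) < c} - 1) *
      (c - sInf ((fun α => ψ α / (α - 1)) '' Ioi (1 : ℝ))) : ℝ) : EReal) :=
  iSup₂_le fun _ hα => EReal.coe_le_coe_iff.mpr <|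
    sub_le_sSup_sub_one_mul_sub_sInf hbdd (bddAbove_setOf_slope_lt hmono hc) hψ1 hα

end

theorem stmt10 (ψ : ℝ → ℝ) (hψ1 : ψ 1 = 0)
    (hmono : MonotoneOn (fun α => ψ α / (α - 1)) (Set.Ioi (1 : ℝ))) :
    (∀ c : ℝ, DinfE ψ < (c : EReal) → PsimE ψ c = (⊤ : EReal)) ∧
    (BddBelow ((fun α => ψ α / (α - 1)) '' Set.Ioi (1 : ℝ)) →
      ∀ c : ℝ, (c : EReal) < DinfE ψ →
        PsimE ψ c ≤
          (((sSup {α : ℝ | 1 < α ∧ ψ α / (α - 1) < c} - 1) *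
            (c - sInf ((fun α => ψ α / (α - 1)) '' Set.Ioi (1 : ℝ))) : ℝ) : EReal)) :=
  ⟨fun _ hc => PsimE_eq_top_of_DinfE_lt hc,
    fun hbdd _ hc => PsimE_le_of_lt_DinfE hψ1 hmono hbdd hc⟩
end

section
/- Let ψ : [1, ∞) → ℝ satisfy ψ(1) = 0 and α ↦ ψ(α)/(α−1) monotone increasing, with D₁⁺ := inf_{α>1} ψ(α)/(α−1) > −∞ and D∞ := lim_{α→∞} ψ(α)/(α−1). Then for every c ∈ (D₁⁺, D∞) there exist 1 < α_{c,min} < α_c ≤ α_{c,max} < ∞ such that sup over α ∈ [1,∞) \ [α_{c,min}, α_{c,max}] of {(α−1)c − ψ(α)} is at most Ψ⁻(c)/2 < Ψ⁻(c), and Ψ⁻(c) = c(α_c − 1) − ψ(α_c⁻), where ψ(α_c⁻) denotes the left limit of ψ at α_c and Ψ⁻(c) := sup_{α≥1}{c(α−1) − ψ(α)}. -/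
/-! Write `f α = c (α - 1) - ψ α = (c - ψ α / (α - 1)) (α - 1)`. The quotient is at least
`D₁⁺ < c`, so `f α ≤ (c - D₁⁺) (α - 1)` is small near `α = 1`; it exceeds `c` beyond some `α₁`,
so `f ≤ 0` there; and it is below `c` somewhere, so `Ψ⁻(c) > 0`. Hence `Ψ⁻(c)` is only approached
on a compact interval `[α_min, α₁]`. Monotonicity of the quotient makes
`g x = c (x - 1) - ψ(x⁻)` an upper bound for `lim sup f` at every `x` (from the left `f → g x`;
from the right `ψ y ≥ ψ(x⁻) (y - 1) / (x - 1)`), while `g ≤ Ψ⁻(c)` as a left limit of values of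
`f`. A cluster point `α_c` of a maximizing sequence therefore has `g α_c = Ψ⁻(c)`, and
`α_c ≠ α_min` because `g α_min ≤ Ψ⁻(c) / 2`. -/

open Set

/-- Shifted Legendre–Fenchel transform `Ψ⁻(c) = sup_{α≥1} {c(α−1) − ψ(α)}` (real-valued). -/
noncomputable def Psm (ψ : ℝ → ℝ) (c : ℝ) : ℝ :=
  sSup ((fun α => c * (α - 1) - ψ α) '' Set.Ici (1 : ℝ))

open Filter Topology Function

theorem IsCompact.exists_le_of_tendsto_of_eventually_lt {X α : Type*} [TopologicalSpace X]
    [LinearOrder α] [DenselyOrdered α] [TopologicalSpace α] [OrderTopology α]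
    {K : Set X} (hK : IsCompact K) {l : Filter X} [l.NeBot] (hlK : l ≤ 𝓟 K)
    {f g : X → α} {P : α} (hf : Tendsto f l (𝓝 P))
    (hg : ∀ x ∈ K, ∀ b, g x < b → ∀ᶠ y in 𝓝 x, f y < b) : ∃ x ∈ K, P ≤ g x := by
  obtain ⟨x, hxK, hx⟩ := hK hlK
  refine ⟨x, hxK, not_lt.1 fun hlt => ?_⟩
  obtain ⟨b, hgb, hbP⟩ := exists_between hlt
  have := hx.neBot
  obtain ⟨y, hyb, hby⟩ := (((hg x hxK b hgb).filter_mono inf_le_left).and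
    ((hf.eventually_const_lt hbP).filter_mono inf_le_right)).exists
  exact hyb.not_gt hby

section LeftLimit

variable {ψ : ℝ → ℝ} {x : ℝ}

theorem mul_sub_one_sub_eq_sub_div_mul (c : ℝ) (hx : x ≠ 1) :
    c * (x - 1) - ψ x = (c - ψ x / (x - 1)) * (x - 1) := by
  field_simp [sub_ne_zero.2 hx]

variable (hmono : MonotoneOn (fun α => ψ α / (α - 1)) (Ioi 1))
include hmono

theorem tendsto_leftLim_of_monotoneOn_div (hx : 1 < x) :
    Tendsto ψ (𝓝[<] x) (𝓝 (leftLim ψ x)) := by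
  have hq := (hmono.mono Ioo_subset_Ioi_self).tendsto_nhdsWithin_Ioo_left (nonempty_Ioo.2 hx)
    ⟨ψ x / (x - 1), forall_mem_image.2 fun y hy => hmono hy.1 hx hy.2.le⟩
  have hψ : Tendsto ψ (𝓝[<] x) (𝓝 (sSup ((fun α => ψ α / (α - 1)) '' Ioo 1 x) * (x - 1))) := by
    refine (hq.mul ((tendsto_id.mono_left nhdsWithin_le_nhds).sub_const 1)).congr' ?_
    filter_upwards [Ioo_mem_nhdsLT hx] with y hy
    exact div_mul_cancel₀ _ (sub_ne_zero.2 hy.1.ne')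
  rwa [leftLim_eq_of_tendsto hψ]

theorem leftLim_le_of_monotoneOn_div (hx : 1 < x) : leftLim ψ x ≤ ψ x := by
  have hlin : Tendsto (fun y => ψ x / (x - 1) * (y - 1)) (𝓝[<] x) (𝓝 (ψ x / (x - 1) * (x - 1))) :=
    ((tendsto_id.mono_left nhdsWithin_le_nhds).sub_const 1).const_mul _
  refine (le_of_tendsto_of_tendsto (tendsto_leftLim_of_monotoneOn_div hmono hx) hlin ?_).trans_eq
    (div_mul_cancel₀ _ (sub_ne_zero.2 hx.ne'))
  filter_upwards [Ioo_mem_nhdsLT hx] with y hy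
  calc ψ y = ψ y / (y - 1) * (y - 1) := (div_mul_cancel₀ _ (sub_ne_zero.2 hy.1.ne')).symm
    _ ≤ ψ x / (x - 1) * (y - 1) :=
      mul_le_mul_of_nonneg_right (hmono hy.1 hx hy.2.le) (by linarith [hy.1])

theorem tendsto_sub_leftLim_of_monotoneOn_div (hx : 1 < x) (c : ℝ) :
    Tendsto (fun y => c * (y - 1) - ψ y) (𝓝[<] x) (𝓝 (c * (x - 1) - leftLim ψ x)) :=
  (((tendsto_id.mono_left nhdsWithin_le_nhds).sub_const 1).const_mul c).sub
    (tendsto_leftLim_of_monotoneOn_div hmono hx)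

theorem eventually_sub_lt_of_sub_leftLim_lt (hx : 1 < x) {c b : ℝ}
    (hb : c * (x - 1) - leftLim ψ x < b) : ∀ᶠ y in 𝓝 x, c * (y - 1) - ψ y < b := by
  rw [← nhdsLT_sup_nhdsGE, eventually_sup]
  constructor
  · exact (tendsto_sub_leftLim_of_monotoneOn_div hmono hx c).eventually_lt_const hb
  · have hL : leftLim ψ x / (x - 1) ≤ ψ x / (x - 1) :=
      div_le_div_of_nonneg_right (leftLim_le_of_monotoneOn_div hmono hx) (by linarith)
    have hG : Tendsto (fun y => (c - leftLim ψ x / (x - 1)) * (y - 1)) (𝓝[≥] x)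
        (𝓝 (c * (x - 1) - leftLim ψ x)) := by
      rw [show c * (x - 1) - leftLim ψ x = (c - leftLim ψ x / (x - 1)) * (x - 1) by
        rw [sub_mul, div_mul_cancel₀ _ (sub_ne_zero.2 hx.ne')]]
      exact ((tendsto_id.mono_left nhdsWithin_le_nhds).sub_const 1).const_mul _
    filter_upwards [hG.eventually_lt_const hb, self_mem_nhdsWithin] with y hyb (hy : x ≤ y)
    have hy1 : 1 < y := hx.trans_le hy
    calc c * (y - 1) - ψ y = (c - ψ y / (y - 1)) * (y - 1) :=
          mul_sub_one_sub_eq_sub_div_mul c hy1.ne'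
      _ ≤ (c - leftLim ψ x / (x - 1)) * (y - 1) :=
        mul_le_mul_of_nonneg_right (by linarith [hmono hx hy1 hy]) (by linarith)
      _ < b := hyb

theorem sub_leftLim_le_of_forall_le (hx : 1 < x) {a c B : ℝ} (ha : a < x)
    (hB : ∀ y ∈ Ioo a x, c * (y - 1) - ψ y ≤ B) : c * (x - 1) - leftLim ψ x ≤ B := by
  refine le_of_tendsto (tendsto_sub_leftLim_of_monotoneOn_div hmono hx c) ?_
  filter_upwards [Ioo_mem_nhdsLT ha] using hB

end LeftLimit

section Psm

variable {ψ : ℝ → ℝ} {c : ℝ}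

theorem sub_le_mul_of_forall_le_div (hψ1 : ψ 1 = 0) {m α : ℝ}
    (hm : ∀ β, 1 < β → m ≤ ψ β / (β - 1)) (hα : 1 ≤ α) :
    c * (α - 1) - ψ α ≤ (c - m) * (α - 1) := by
  rcases hα.eq_or_lt with rfl | hα
  · simp [hψ1]
  · rw [mul_sub_one_sub_eq_sub_div_mul c hα.ne']
    exact mul_le_mul_of_nonneg_right (by linarith [hm α hα]) (by linarith)

theorem sub_nonpos_of_le_div_of_le (hmono : MonotoneOn (fun α => ψ α / (α - 1)) (Ioi 1))
    {α₁ α : ℝ} (hα₁ : 1 < α₁) (hc : c ≤ ψ α₁ / (α₁ - 1)) (hα : α₁ ≤ α) :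
    c * (α - 1) - ψ α ≤ 0 := by
  have hα1 : 1 < α := hα₁.trans_le hα
  rw [mul_sub_one_sub_eq_sub_div_mul c hα1.ne']
  exact mul_nonpos_of_nonpos_of_nonneg (by linarith [hmono hα₁ hα1 hα]) (by linarith)

theorem bddAbove_image_sub (hψ1 : ψ 1 = 0)
    (hmono : MonotoneOn (fun α => ψ α / (α - 1)) (Ioi 1)) {m α₁ : ℝ}
    (hm : ∀ β, 1 < β → m ≤ ψ β / (β - 1)) (hmc : m ≤ c) (hα₁ : 1 < α₁)
    (hcα₁ : c ≤ ψ α₁ / (α₁ - 1)) : BddAbove ((fun α => c * (α - 1) - ψ α) '' Ici 1) := by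
  refine ⟨(c - m) * (α₁ - 1), forall_mem_image.2 fun α (hα : 1 ≤ α) => ?_⟩
  rcases le_total α α₁ with h | h
  · exact (sub_le_mul_of_forall_le_div hψ1 hm hα).trans
      (mul_le_mul_of_nonneg_left (by linarith) (by linarith))
  · exact (sub_nonpos_of_le_div_of_le hmono hα₁ hcα₁ h).trans
      (mul_nonneg (by linarith) (by linarith))

theorem psm_pos_of_div_lt (hbdd : BddAbove ((fun α => c * (α - 1) - ψ α) '' Ici 1)) {α₀ : ℝ}
    (hα₀ : 1 < α₀) (hα₀c : ψ α₀ / (α₀ - 1) < c) : 0 < Psm ψ c := by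
  refine lt_of_lt_of_le ?_ (le_csSup hbdd ⟨α₀, mem_Ici.2 hα₀.le, rfl⟩)
  show 0 < c * (α₀ - 1) - ψ α₀
  rw [mul_sub_one_sub_eq_sub_div_mul c hα₀.ne']
  exact mul_pos (by linarith) (by linarith)

theorem sub_le_half_psm_of_notMem_Icc (hψ1 : ψ 1 = 0)
    (hmono : MonotoneOn (fun α => ψ α / (α - 1)) (Ioi 1)) {m α₁ α : ℝ}
    (hm : ∀ β, 1 < β → m ≤ ψ β / (β - 1)) (hmc : m < c) (hα₁ : 1 < α₁)
    (hcα₁ : c ≤ ψ α₁ / (α₁ - 1)) (hP : 0 ≤ Psm ψ c) (hα : 1 ≤ α)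
    (hαK : α ∉ Icc (1 + Psm ψ c / (2 * (c - m))) α₁) : c * (α - 1) - ψ α ≤ Psm ψ c / 2 := by
  rcases not_and_or.1 hαK with h | h
  · calc c * (α - 1) - ψ α ≤ (c - m) * (α - 1) := sub_le_mul_of_forall_le_div hψ1 hm hα
      _ ≤ (c - m) * (Psm ψ c / (2 * (c - m))) :=
        mul_le_mul_of_nonneg_left (by linarith) (sub_pos.2 hmc).le
      _ = Psm ψ c / 2 := by field_simp [(sub_pos.2 hmc).ne']
  · exact (sub_nonpos_of_le_div_of_le hmono hα₁ hcα₁ (not_le.1 h).le).trans (by linarith)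

theorem exists_mem_Ioc_psm_eq_sub_leftLim (hmono : MonotoneOn (fun α => ψ α / (α - 1)) (Ioi 1))
    {a b B : ℝ} (ha : 1 < a) (hbdd : BddAbove ((fun α => c * (α - 1) - ψ α) '' Ici 1))
    (hB : B < Psm ψ c) (htail : ∀ α, 1 ≤ α → α ∉ Icc a b → c * (α - 1) - ψ α ≤ B) :
    ∃ αc ∈ Ioc a b, Psm ψ c = c * (αc - 1) - leftLim ψ αc := by
  obtain ⟨u, -, hu, hmem⟩ := exists_seq_tendsto_sSup (nonempty_Ici.image _) hbdd
  choose v hv1 hfv using hmem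
  have hvK : Tendsto v atTop (𝓟 (Icc a b)) := by
    refine tendsto_principal.2 ((hu.eventually_const_lt hB).mono fun n hn => ?_)
    by_contra hn'
    exact (htail _ (hv1 n) hn').not_gt (hn.trans_eq (hfv n).symm)
  have hfu : Tendsto ((fun α => c * (α - 1) - ψ α) ∘ v) atTop (𝓝 (Psm ψ c)) := by
    rwa [show (fun α => c * (α - 1) - ψ α) ∘ v = u from funext hfv]
  obtain ⟨αc, hαc, hPle⟩ := isCompact_Icc.exists_le_of_tendsto_of_eventually_lt hvK
    (tendsto_map'_iff.2 hfu) (g := fun x => c * (x - 1) - leftLim ψ x)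
    fun x hx _ => eventually_sub_lt_of_sub_leftLim_lt hmono (ha.trans_le hx.1)
  have hαc1 : 1 < αc := ha.trans_le hαc.1
  have hle : c * (αc - 1) - leftLim ψ αc ≤ Psm ψ c :=
    sub_leftLim_le_of_forall_le hmono hαc1 hαc1 fun y hy => le_csSup hbdd ⟨y, hy.1.le, rfl⟩
  refine ⟨αc, ⟨hαc.1.lt_of_ne fun hac => ?_, hαc.2⟩, le_antisymm hPle hle⟩
  subst hac
  have hga : c * (a - 1) - leftLim ψ a ≤ B :=
    sub_leftLim_le_of_forall_le hmono ha ha fun y hy => htail y hy.1.le fun h => h.1.not_gt hy.2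
  linarith

end Psm

theorem stmt11 (ψ : ℝ → ℝ) (hψ1 : ψ 1 = 0)
    (hmono : MonotoneOn (fun α => ψ α / (α - 1)) (Set.Ioi (1 : ℝ)))
    (hbdd : BddBelow ((fun α => ψ α / (α - 1)) '' Set.Ioi (1 : ℝ)))
    (c : ℝ)
    (hc1 : sInf ((fun α => ψ α / (α - 1)) '' Set.Ioi (1 : ℝ)) < c)
    (hc2 : (c : EReal) < DinfE ψ) :
    ∃ αmin αc αmax : ℝ, 1 < αmin ∧ αmin < αc ∧ αc ≤ αmax ∧
      (∀ α : ℝ, 1 ≤ α → α ∉ Set.Icc αmin αmax → c * (α - 1) - ψ α ≤ Psm ψ c / 2) ∧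
      Psm ψ c / 2 < Psm ψ c ∧
      Psm ψ c = c * (αc - 1) - Function.leftLim ψ αc := by
  obtain ⟨_, ⟨α₀, hα₀ : 1 < α₀, rfl⟩, hα₀c⟩ := exists_lt_of_csInf_lt (nonempty_Ioi.image _) hc1
  obtain ⟨α₁, hα₁, hcα₁⟩ : ∃ α₁, 1 < α₁ ∧ c < ψ α₁ / (α₁ - 1) := by
    simpa only [DinfE, lt_iSup_iff, mem_Ioi, exists_prop, EReal.coe_lt_coe_iff] using hc2
  set m := sInf ((fun α => ψ α / (α - 1)) '' Ioi 1)
  have hm : ∀ α, 1 < α → m ≤ ψ α / (α - 1) := fun α hα => csInf_le hbdd ⟨α, hα, rfl⟩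
  have hbddA := bddAbove_image_sub hψ1 hmono hm hc1.le hα₁ hcα₁.le
  have hP : 0 < Psm ψ c := psm_pos_of_div_lt hbddA hα₀ hα₀c
  have hαmin : 1 < 1 + Psm ψ c / (2 * (c - m)) :=
    lt_add_of_pos_right _ (div_pos hP (by linarith))
  have htail := fun α =>
    sub_le_half_psm_of_notMem_Icc (α := α) hψ1 hmono hm hc1 hα₁ hcα₁.le hP.le
  obtain ⟨αc, hαc, hPαc⟩ :=
    exists_mem_Ioc_psm_eq_sub_leftLim hmono hαmin hbddA (half_lt_self hP) htail
  exact ⟨_, αc, α₁, hαmin, hαc.1, hαc.2, htail, half_lt_self hP, hPαc⟩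
end

section
/- Let ψ : [1, ∞) → ℝ satisfy ψ(1) = 0 and α ↦ ψ(α)/(α−1) monotone increasing, with D₁⁺ := inf_{α>1} ψ(α)/(α−1) > −∞ and D∞ := lim_{α→∞} ψ(α)/(α−1). Then Ψ⁻(c) := sup_{α≥1}{c(α−1) − ψ(α)} is strictly increasing in c on the interval (D₁⁺, D∞]. -/
open Set

/-!
`Ψ⁻` is a supremum of the affine functions `c ↦ c(α−1) − ψ(α)`, all of which are `≤ 0` at
`c = m := D₁⁺`. For `m < c₁ < c₂` the identity
`(c₂ − m) f(c₁) = (c₂ − c₁) f(m) + (c₁ − m) f(c₂)` therefore gives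
`Ψ⁻(c₁) ≤ (c₁ − m)/(c₂ − m) · Ψ⁻(c₂)`, which forces `Ψ⁻(c₁) < Ψ⁻(c₂)` as soon as
`0 < Ψ⁻(c₁) < ∞`. Positivity holds because some slope `ψ(β)/(β−1)` lies below `c₁`; finiteness
because some slope `ψ(α₀)/(α₀−1)` lies above `c₁ < D∞`, so monotonicity of the slopes makes every
`α ≥ α₀` contribute a negative value.
-/

namespace PsimE

variable {ψ : ℝ → ℝ}

theorem coe_le {c α : ℝ} (hα : 1 ≤ α) : ((c * (α - 1) - ψ α : ℝ) : EReal) ≤ PsimE ψ c :=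
  le_iSup₂_of_le α hα le_rfl

theorem le_coe_iff {c b : ℝ} : PsimE ψ c ≤ b ↔ ∀ α, 1 ≤ α → c * (α - 1) - ψ α ≤ b := by
  simp only [PsimE, iSup₂_le_iff, mem_Ici, EReal.coe_le_coe_iff]

theorem affine_eq_mul_sub_slope (c : ℝ) {α : ℝ} (hα : 1 < α) :
    c * (α - 1) - ψ α = (α - 1) * (c - ψ α / (α - 1)) := by
  field_simp [(sub_pos.2 hα).ne']

theorem affine_nonpos {m : ℝ} (hψ1 : 0 ≤ ψ 1) (hm : ∀ α, 1 < α → m ≤ ψ α / (α - 1)) {α : ℝ}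
    (hα : 1 ≤ α) : m * (α - 1) - ψ α ≤ 0 := by
  rcases hα.eq_or_lt with rfl | hα
  · simpa using hψ1
  · rw [affine_eq_mul_sub_slope m hα]
    exact mul_nonpos_of_nonneg_of_nonpos (by linarith) (by linarith [hm α hα])

theorem pos_of_slope_lt {c β : ℝ} (hβ : 1 < β) (hc : ψ β / (β - 1) < c) : 0 < PsimE ψ c := by
  refine lt_of_lt_of_le ?_ (coe_le hβ.le)
  rw [affine_eq_mul_sub_slope c hβ]
  exact EReal.coe_pos.2 (mul_pos (by linarith) (by linarith))

theorem le_of_le_slope (hψ1 : 0 ≤ ψ 1)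
    (hmono : MonotoneOn (fun α => ψ α / (α - 1)) (Ioi 1)) {m c α₀ : ℝ}
    (hm : ∀ α, 1 < α → m ≤ ψ α / (α - 1)) (hmc : m ≤ c) (hα₀ : 1 < α₀)
    (hc : c ≤ ψ α₀ / (α₀ - 1)) : PsimE ψ c ≤ ((α₀ - 1) * (c - m) : ℝ) := by
  refine le_coe_iff.2 fun α hα => ?_
  rcases hα.eq_or_lt with rfl | hα
  · have := mul_nonneg (sub_pos.2 hα₀).le (sub_nonneg.2 hmc)
    simp only [sub_self, mul_zero, zero_sub]
    linarith
  rw [affine_eq_mul_sub_slope c hα]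
  rcases le_total α α₀ with hαα₀ | hα₀α
  · calc (α - 1) * (c - ψ α / (α - 1)) ≤ (α - 1) * (c - m) :=
          mul_le_mul_of_nonneg_left (by linarith [hm α hα]) (by linarith)
      _ ≤ (α₀ - 1) * (c - m) := mul_le_mul_of_nonneg_right (by linarith) (by linarith)
  · have hslope : ψ α₀ / (α₀ - 1) ≤ ψ α / (α - 1) := hmono hα₀ hα hα₀α
    calc (α - 1) * (c - ψ α / (α - 1)) ≤ 0 :=
          mul_nonpos_of_nonneg_of_nonpos (by linarith) (by linarith)
      _ ≤ (α₀ - 1) * (c - m) := mul_nonneg (by linarith) (by linarith)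

theorem lt_of_affine_nonpos {m c₁ c₂ : ℝ} (hm : ∀ α, 1 ≤ α → m * (α - 1) - ψ α ≤ 0) (hmc : m < c₁)
    (hc : c₁ < c₂) (hpos : 0 < PsimE ψ c₁) (htop : PsimE ψ c₁ ≠ ⊤) :
    PsimE ψ c₁ < PsimE ψ c₂ := by
  obtain ⟨L, hL⟩ : ∃ L : ℝ, PsimE ψ c₁ = L := ⟨_, (EReal.coe_toReal htop hpos.ne_bot).symm⟩
  rw [hL] at hpos ⊢
  by_contra! hle
  have hL0 : 0 < L := EReal.coe_pos.1 hpos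
  have hdom : (c₂ - m) * L ≤ (c₁ - m) * L := by
    rw [← le_div_iff₀' (by linarith), ← EReal.coe_le_coe_iff, ← hL, le_coe_iff]
    intro α hα
    rw [le_div_iff₀' (by linarith)]
    -- `(c₂ - m) f(c₁) = (c₂ - c₁) f(m) + (c₁ - m) f(c₂)` for the affine `f = (· * (α - 1) - ψ α)`
    nlinarith [hm α hα, le_coe_iff.1 hle α hα]
  nlinarith

end PsimE

/-- `Ψ⁻` is strictly increasing on `(D₁⁺, D∞]`. -/
theorem stmt12 (ψ : ℝ → ℝ) (hψ1 : ψ 1 = 0)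
    (hmono : MonotoneOn (fun α => ψ α / (α - 1)) (Set.Ioi (1 : ℝ)))
    (hbdd : BddBelow ((fun α => ψ α / (α - 1)) '' Set.Ioi (1 : ℝ))) :
    StrictMonoOn (fun c : ℝ => PsimE ψ c)
      {c : ℝ | sInf ((fun α => ψ α / (α - 1)) '' Set.Ioi (1 : ℝ)) < c ∧
        (c : EReal) ≤ DinfE ψ} := by
  rintro c₁ ⟨hMc₁, -⟩ c₂ ⟨-, hc₂D⟩ hc
  set M := sInf ((fun α => ψ α / (α - 1)) '' Ioi (1 : ℝ))
  have hM : ∀ α, 1 < α → M ≤ ψ α / (α - 1) := fun α hα => csInf_le hbdd ⟨α, hα, rfl⟩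
  obtain ⟨_, ⟨β, hβ, rfl⟩, hβc₁⟩ := exists_lt_of_csInf_lt ⟨_, mem_image_of_mem _ one_lt_two⟩ hMc₁
  have hc₁D : (c₁ : EReal) < DinfE ψ := (EReal.coe_lt_coe_iff.2 hc).trans_le hc₂D
  simp only [DinfE, lt_iSup_iff, mem_Ioi, EReal.coe_lt_coe_iff, exists_prop] at hc₁D
  obtain ⟨α₀, hα₀, hc₁α₀⟩ := hc₁D
  have hfin : PsimE ψ c₁ ≠ ⊤ := ne_top_of_le_ne_top (EReal.coe_ne_top _)
    (PsimE.le_of_le_slope hψ1.ge hmono hM hMc₁.le hα₀ hc₁α₀.le)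
  exact PsimE.lt_of_affine_nonpos (fun _ => PsimE.affine_nonpos hψ1.ge hM) hMc₁ hc
    (PsimE.pos_of_slope_lt hβ hβc₁) hfin
end

section
/- In the setting of the previous statement (ψ with ψ(1)=0, ψ(α)/(α−1) increasing, D₁⁺ > −∞), set Ψ(c) := sup_{α≥1}{cα − ψ(α)}, r₁⁺ := lim_{c↘D₁⁺} Ψ(c) and r∞ := lim_{c↗D∞} Ψ(c). Then for r ≥ r∞ (with r∞ < ∞ and hence D∞ < ∞ and r∞ = Ψ(D∞)): Ψ̃(r) = r − D∞; and for every r > r∞ and every u ∈ [0,1), one has the strict inequality ur − ψ̃(u) < Ψ̃(r) = r − D∞. -/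
open Set

/-- The transpose-type function `ψ̃(u) := (1−u) ψ(1/(1−u))`. -/
noncomputable def psit (ψ : ℝ → ℝ) (u : ℝ) : ℝ :=
  (1 - u) * ψ (1 / (1 - u))

/-- `Ψ̃(r) := sup_{0 ≤ u ≤ 1} {ur − ψ̃(u)}` (equal to the supremum over `[0,1)`). -/
noncomputable def tPsi (ψ : ℝ → ℝ) (r : ℝ) : ℝ :=
  sSup ((fun u => u * r - psit ψ u) '' Set.Ico (0 : ℝ) 1)

/-- Key: from the hypothesis `⨆_{c<dinf} Ψ(c) ≤ s` we get `dinf·α − ψ(α) ≤ s` for all `α ≥ 1`. -/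
lemma keyA (ψ : ℝ → ℝ) (dinf s : ℝ)
    (h : (⨆ c ∈ Set.Iio dinf, PsiE ψ c) ≤ (s : EReal)) :
    ∀ α, 1 ≤ α → dinf * α - ψ α ≤ s := by
  intro α hα
  have hαpos : (0:ℝ) < α := lt_of_lt_of_le one_pos hα
  have h1 : ∀ c, c < dinf → c * α - ψ α ≤ s := by
    intro c hc
    have h2 : ((c * α - ψ α : ℝ) : EReal) ≤ PsiE ψ c := by
      exact le_iSup₂ (f := fun β (_ : β ∈ Set.Ici (1:ℝ)) => ((c * β - ψ β : ℝ) : EReal)) α hα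
    have h3 : PsiE ψ c ≤ ⨆ c ∈ Set.Iio dinf, PsiE ψ c :=
      le_iSup₂ (f := fun c (_ : c ∈ Set.Iio dinf) => PsiE ψ c) c hc
    exact_mod_cast h2.trans (h3.trans h)
  by_contra hlt
  push_neg at hlt
  have hc0 : (s + ψ α) / α < dinf := by rw [div_lt_iff₀ hαpos]; linarith
  set c := ((s + ψ α) / α + dinf) / 2 with hcdef
  have hc1 : c < dinf := by rw [hcdef]; linarith
  have := h1 c hc1
  have hc2 : c ≤ (s + ψ α) / α := by rw [le_div_iff₀ hαpos]; linarith
  linarith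

lemma gle (ψ : ℝ → ℝ) (dinf : ℝ) (hdinf : DinfE ψ = (dinf : EReal)) :
    ∀ α, 1 < α → ψ α / (α - 1) ≤ dinf := by
  intro α hα
  have h2 : ((ψ α / (α - 1) : ℝ) : EReal) ≤ DinfE ψ :=
    le_iSup₂ (f := fun β (_ : β ∈ Set.Ioi (1:ℝ)) => ((ψ β / (β - 1) : ℝ) : EReal)) α hα
  rw [hdinf] at h2
  exact_mod_cast h2

/-- For `r ≥ r∞ := lim_{c↗D∞} Ψ(c)` (finite, whence `D∞` finite), `Ψ̃(r) = r − D∞`; moreover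
for `r > r∞` the supremum defining `Ψ̃(r)` is not attained at any `u ∈ [0,1)`. -/
theorem stmt14 (ψ : ℝ → ℝ) (hψ1 : ψ 1 = 0)
    (hmono : MonotoneOn (fun α => ψ α / (α - 1)) (Set.Ioi (1 : ℝ)))
    (hbdd : BddBelow ((fun α => ψ α / (α - 1)) '' Set.Ioi (1 : ℝ)))
    (dinf : ℝ) (hdinf : DinfE ψ = (dinf : EReal)) :
    (∀ r : ℝ, (⨆ c ∈ Set.Iio dinf, PsiE ψ c) ≤ (r : EReal) →
      tPsi ψ r = r - dinf) ∧
    (∀ r : ℝ, (⨆ c ∈ Set.Iio dinf, PsiE ψ c) < (r : EReal) →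
      ∀ u ∈ Set.Ico (0 : ℝ) 1, u * r - psit ψ u < tPsi ψ r) := by
  -- basic facts about α(u) := (1-u)⁻¹
  have halg : ∀ u ∈ Set.Ico (0:ℝ) 1, ∃ α : ℝ, 1 ≤ α ∧ (1 - u) * α = 1 ∧
      psit ψ u = (1 - u) * ψ α ∧ psit ψ u ≤ u * dinf := by
    intro u hu
    obtain ⟨hu0, hu1⟩ := hu
    have h1u : (0:ℝ) < 1 - u := by linarith
    refine ⟨(1 - u)⁻¹, ?_, mul_inv_cancel₀ h1u.ne', ?_, ?_⟩
    · rw [le_inv_comm₀ one_pos h1u] ; simpa using hu0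
    · simp [psit, one_div]
    · rcases eq_or_lt_of_le hu0 with h0 | h0
      · simp [psit, ← h0, hψ1]
      · set α := (1 - u)⁻¹ with hαdef
        have hα1 : 1 < α := by
          rw [hαdef, lt_inv_comm₀ one_pos h1u]; simpa using h0
        have hg := gle ψ dinf hdinf α hα1
        have hα0 : α - 1 ≠ 0 := sub_ne_zero.mpr hα1.ne'
        have hψα : ψ α = ψ α / (α - 1) * (α - 1) := (div_mul_cancel₀ _ hα0).symm
        have hprod : (1 - u) * α = 1 := mul_inv_cancel₀ h1u.ne'
        have hIco : (1 - u) * (α - 1) = u := by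
          have : (1 - u) * (α - 1) = (1 - u) * α - (1 - u) := by ring
          rw [this, hprod]; ring
        have : psit ψ u = ψ α / (α - 1) * u := by
          rw [show psit ψ u = (1 - u) * ψ α by simp [psit, one_div, hαdef],
            div_mul_eq_mul_div, eq_div_iff hα0]
          linear_combination ψ α * hIco
        rw [this]
        exact mul_le_mul_of_nonneg_right hg h0.le |>.trans_eq (mul_comm _ _)
  -- part (a) as a lemma, used in both parts
  have parta : ∀ r : ℝ, (⨆ c ∈ Set.Iio dinf, PsiE ψ c) ≤ (r : EReal) → tPsi ψ r = r - dinf := by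
    intro r hr
    have hkey := keyA ψ dinf r hr
    have hrd : dinf ≤ r := by have := hkey 1 le_rfl; simpa [hψ1] using this
    set S := (fun u => u * r - psit ψ u) '' Set.Ico (0:ℝ) 1 with hS
    have hmem0 : (0:ℝ) ∈ S := by
      refine ⟨0, ⟨le_rfl, one_pos⟩, ?_⟩
      simp [psit, hψ1]
    have hub : ∀ x ∈ S, x ≤ r - dinf := by
      rintro x ⟨u, hu, rfl⟩
      obtain ⟨α, hα1, hprod, hpsit, _⟩ := halg u hu
      have h1u : (0:ℝ) < 1 - u := by have := hu.2; linarith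
      have hk := hkey α hα1
      have := mul_le_mul_of_nonneg_left hk h1u.le
      have e : (1 - u) * (dinf * α - ψ α) = dinf - psit ψ u := by
        rw [hpsit]
        calc (1 - u) * (dinf * α - ψ α) = dinf * ((1 - u) * α) - (1 - u) * ψ α := by ring
          _ = dinf - (1 - u) * ψ α := by rw [hprod]; ring
      rw [e] at this
      have e2 : (1 - u) * r = r - u * r := by ring
      rw [e2] at this
      show u * r - psit ψ u ≤ r - dinf
      linarith
    have hbddS : BddAbove S := ⟨r - dinf, hub⟩
    have hle : sSup S ≤ r - dinf := csSup_le ⟨0, hmem0⟩ hub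
    have hge : r - dinf ≤ sSup S := by
      by_contra hcon
      push_neg at hcon
      have hS0 : (0:ℝ) ≤ sSup S := le_csSup hbddS hmem0
      set t := r - dinf with ht
      have ht0 : 0 < t := lt_of_le_of_lt hS0 hcon
      set u := (sSup S / t + 1) / 2 with hudef
      have hq : sSup S / t < 1 := (div_lt_one ht0).mpr hcon
      have hq0 : 0 ≤ sSup S / t := div_nonneg hS0 ht0.le
      have huI : u ∈ Set.Ico (0:ℝ) 1 := ⟨by rw [hudef]; linarith, by rw [hudef]; linarith⟩
      obtain ⟨α, hα1, hprod, hpsit, hpsit_le⟩ := halg u huI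
      have hfu : u * t ≤ u * r - psit ψ u := by
        have : u * t = u * r - u * dinf := by rw [ht]; ring
        rw [this]; linarith [hpsit_le]
      have hmemu : u * r - psit ψ u ∈ S := ⟨u, huI, rfl⟩
      have h1 : u * r - psit ψ u ≤ sSup S := le_csSup hbddS hmemu
      have h2 : sSup S < u * t := by
        have : sSup S / t < u := by rw [hudef]; linarith
        calc sSup S = sSup S / t * t := by field_simp
          _ < u * t := by exact mul_lt_mul_of_pos_right this ht0
      linarith
    exact le_antisymm hle hge
  refine ⟨parta, ?_⟩
  intro r hr u hu
  obtain ⟨s, hs1, hs2⟩ := EReal.exists_between_coe_real hr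
  have hsr : s < r := by exact_mod_cast hs2
  have hkey := keyA ψ dinf s hs1.le
  rw [parta r hr.le]
  obtain ⟨α, hα1, hprod, hpsit, _⟩ := halg u hu
  have h1u : (0:ℝ) < 1 - u := by have := hu.2; linarith
  have hk : dinf * α - ψ α < r := lt_of_le_of_lt (hkey α hα1) hsr
  have hmul := mul_lt_mul_of_pos_left hk h1u
  have e : (1 - u) * (dinf * α - ψ α) = dinf - psit ψ u := by
    rw [hpsit]
    calc (1 - u) * (dinf * α - ψ α) = dinf * ((1 - u) * α) - (1 - u) * ψ α := by ring
      _ = dinf - (1 - u) * ψ α := by rw [hprod]; ring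
  rw [e] at hmul
  nlinarith
end

section
/- Let ψ : [1, ∞) → ℝ satisfy ψ(1) = 0, α ↦ ψ(α)/(α−1) monotone increasing, D₁⁺ > −∞, and let r₁⁺ = D₁⁺, r∞ := lim_{c↗D∞} Ψ(c) where Ψ(c) := sup_{α≥1}{cα − ψ(α)}. Then Ψ is strictly increasing and continuous on (−∞, D∞], and for r ∈ (r₁⁺, r∞), Ψ̃(r) = r − Ψ⁻¹(r) = Ψ⁻(Ψ⁻¹(r)), where Ψ⁻¹ is the inverse of Ψ on (−∞, D∞] and Ψ̃(r) := sup_{0≤u≤1}{ur − ψ̃(u)}, ψ̃(u) := (1−u)ψ(1/(1−u)) with ψ̃(1) := D∞, Ψ⁻(c) := Ψ(c) − c. -/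
open Set

/-! ### Auxiliary lemmas -/

private lemma term_le_psim (ψ : ℝ → ℝ) (c : ℝ) {α : ℝ} (hα : α ∈ Set.Ici (1:ℝ)) :
    ((c * (α - 1) - ψ α : ℝ) : EReal) ≤ PsimE ψ c :=
  le_iSup₂ (f := fun α (_ : α ∈ Set.Ici (1:ℝ)) => ((c * (α - 1) - ψ α : ℝ) : EReal)) α hα

private lemma psim_nonneg (ψ : ℝ → ℝ) (hψ1 : ψ 1 = 0) (c : ℝ) :
    (0 : EReal) ≤ PsimE ψ c := by
  have := term_le_psim ψ c (α := 1) (by simp)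
  simpa [hψ1] using this

private lemma psim_ne_bot (ψ : ℝ → ℝ) (hψ1 : ψ 1 = 0) (c : ℝ) : PsimE ψ c ≠ ⊥ :=
  ne_bot_of_le_ne_bot (by simp) (psim_nonneg ψ hψ1 c)

private lemma psim_mono (ψ : ℝ → ℝ) : Monotone (PsimE ψ) := by
  intro c c' hcc'
  refine iSup₂_le fun α hα => ?_
  refine le_trans ?_ (term_le_psim ψ c' hα)
  have : c * (α - 1) - ψ α ≤ c' * (α - 1) - ψ α := by nlinarith [mem_Ici.mp hα]
  exact_mod_cast this

private lemma psi_monotone (ψ : ℝ → ℝ) : Monotone (fun c => PsiE ψ c) := by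
  intro c c' hcc'
  refine iSup₂_le fun α hα => ?_
  refine le_trans ?_ (le_iSup₂ (f := fun α (_ : α ∈ Set.Ici (1:ℝ)) =>
    ((c' * α - ψ α : ℝ) : EReal)) α hα)
  have : c * α - ψ α ≤ c' * α - ψ α := by nlinarith [mem_Ici.mp hα]
  exact_mod_cast this

private lemma psi_eq_add (ψ : ℝ → ℝ) (c : ℝ) : PsiE ψ c = (c : EReal) + PsimE ψ c := by
  refine le_antisymm ?_ ?_
  · refine iSup₂_le fun α hα => ?_
    have h1 : ((c * α - ψ α : ℝ) : EReal) = (c : EReal) + ((c * (α - 1) - ψ α : ℝ) : EReal) := by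
      rw [← EReal.coe_add]; norm_cast; ring
    rw [h1]
    exact add_le_add_right (term_le_psim ψ c hα) _
  · have h2 : PsimE ψ c ≤ ((-c : ℝ) : EReal) + PsiE ψ c := by
      refine iSup₂_le fun α hα => ?_
      have h1 : ((c * (α - 1) - ψ α : ℝ) : EReal)
          = ((-c : ℝ) : EReal) + ((c * α - ψ α : ℝ) : EReal) := by
        rw [← EReal.coe_add]; norm_cast; ring
      rw [h1]
      exact add_le_add_right (le_iSup₂ (f := fun α (_ : α ∈ Set.Ici (1:ℝ)) =>
        ((c * α - ψ α : ℝ) : EReal)) α hα) _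
    calc (c : EReal) + PsimE ψ c ≤ (c : EReal) + (((-c : ℝ) : EReal) + PsiE ψ c) :=
          add_le_add_right h2 _
      _ = ((c : EReal) + ((-c : ℝ) : EReal)) + PsiE ψ c := (add_assoc _ _ _).symm
      _ = PsiE ψ c := by
          rw [← EReal.coe_add]
          norm_num

private lemma psim_ne_top (ψ : ℝ → ℝ) (hψ1 : ψ 1 = 0)
    (hmono : MonotoneOn (fun α => ψ α / (α - 1)) (Set.Ioi (1 : ℝ)))
    (hbdd : BddBelow ((fun α => ψ α / (α - 1)) '' Set.Ioi (1 : ℝ)))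
    {c : ℝ} (hc : (c : EReal) < DinfE ψ) : PsimE ψ c ≠ ⊤ := by
  obtain ⟨α₀, hα₀, hcα₀⟩ := lt_biSup_iff.mp hc
  rw [EReal.coe_lt_coe_iff] at hcα₀
  set m₀ : ℝ := sInf ((fun α => ψ α / (α - 1)) '' Set.Ioi (1 : ℝ)) with hm₀
  set B : ℝ := max 0 ((α₀ - 1) * (c - m₀)) with hB
  have hle : PsimE ψ c ≤ (B : EReal) := by
    refine iSup₂_le fun α hα => ?_
    rw [EReal.coe_le_coe_iff]
    have hα1 : (1:ℝ) ≤ α := hα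
    rcases eq_or_lt_of_le hα1 with h | h
    · rw [← h]; simp [hψ1, hB]
    · -- α > 1
      have h0 : α - 1 ≠ 0 := by linarith
      have hψα : (α - 1) * (ψ α / (α - 1)) = ψ α := by field_simp
      have hm₀le : m₀ ≤ ψ α / (α - 1) := csInf_le hbdd ⟨α, h, rfl⟩
      rcases le_or_gt c (ψ α / (α - 1)) with h2 | h2
      · have : c * (α - 1) - ψ α ≤ 0 := by nlinarith
        exact this.trans (le_max_left _ _)
      · have hαα₀ : α < α₀ := by
          by_contra hcon
          push_neg at hcon
          have := hmono hα₀ (lt_of_lt_of_le (mem_Ioi.mp hα₀) hcon) hcon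
          simp only at this
          nlinarith
        have h3 : c * (α - 1) - ψ α ≤ (α₀ - 1) * (c - m₀) := by nlinarith
        exact h3.trans (le_max_right _ _)
  exact ne_top_of_le_ne_top (EReal.coe_ne_top B) hle

private lemma psim_coe (ψ : ℝ → ℝ) (hψ1 : ψ 1 = 0)
    (hmono : MonotoneOn (fun α => ψ α / (α - 1)) (Set.Ioi (1 : ℝ)))
    (hbdd : BddBelow ((fun α => ψ α / (α - 1)) '' Set.Ioi (1 : ℝ)))
    {c : ℝ} (hc : (c : EReal) < DinfE ψ) :
    PsimE ψ c = (((PsimE ψ c).toReal : ℝ) : EReal) :=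
  (EReal.coe_toReal (psim_ne_top ψ hψ1 hmono hbdd hc) (psim_ne_bot ψ hψ1 c)).symm

private lemma psi_strictMono (ψ : ℝ → ℝ) (hψ1 : ψ 1 = 0)
    (hmono : MonotoneOn (fun α => ψ α / (α - 1)) (Set.Ioi (1 : ℝ)))
    (hbdd : BddBelow ((fun α => ψ α / (α - 1)) '' Set.Ioi (1 : ℝ))) :
    StrictMonoOn (fun c : ℝ => PsiE ψ c) {c : ℝ | (c : EReal) ≤ DinfE ψ} := by
  intro c hc c' hc' hlt
  have hcd : (c : EReal) < DinfE ψ := lt_of_lt_of_le (EReal.coe_lt_coe_iff.mpr hlt) hc'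
  set m : ℝ := (PsimE ψ c).toReal with hm
  have hcoe : PsimE ψ c = (m : EReal) := psim_coe ψ hψ1 hmono hbdd hcd
  simp only
  calc PsiE ψ c = (c : EReal) + (m : EReal) := by rw [psi_eq_add, hcoe]
    _ = ((c + m : ℝ) : EReal) := by rw [EReal.coe_add]
    _ < ((c' + m : ℝ) : EReal) := by exact_mod_cast by linarith
    _ = (c' : EReal) + (m : EReal) := by rw [EReal.coe_add]
    _ ≤ (c' : EReal) + PsimE ψ c' := add_le_add_right (hcoe ▸ psim_mono ψ hlt.le) _
    _ = PsiE ψ c' := (psi_eq_add ψ c').symm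

private lemma psi_sup_Iio (ψ : ℝ → ℝ) (x : ℝ) :
    sSup ((fun c => PsiE ψ c) '' Set.Iio x) = PsiE ψ x := by
  refine le_antisymm ?_ ?_
  · refine sSup_le ?_
    rintro _ ⟨c, hc, rfl⟩
    exact psi_monotone ψ (le_of_lt hc)
  · refine iSup₂_le fun α hα => ?_
    have hα1 : (1:ℝ) ≤ α := hα
    have key : ∀ ε : ℝ, 0 < ε →
        (((x - ε) * α - ψ α : ℝ) : EReal) ≤ sSup ((fun c => PsiE ψ c) '' Set.Iio x) := by
      intro ε hε
      refine le_trans (le_iSup₂ (f := fun α (_ : α ∈ Set.Ici (1:ℝ)) =>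
        (((x - ε) * α - ψ α : ℝ) : EReal)) α hα) ?_
      exact le_sSup ⟨x - ε, by simp [hε], rfl⟩
    refine le_of_forall_lt fun b hb => ?_
    induction b using EReal.rec with
    | bot => exact lt_of_lt_of_le (EReal.bot_lt_coe _) (key 1 one_pos)
    | top => exact absurd hb (by simp)
    | coe B =>
      rw [EReal.coe_lt_coe_iff] at hb
      set ε : ℝ := (x * α - ψ α - B) / (2 * α) with hε
      have hαpos : (0:ℝ) < α := lt_of_lt_of_le one_pos hα1
      have hεpos : 0 < ε := by
        apply div_pos (by linarith) (by linarith)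
      have hBlt : B < (x - ε) * α - ψ α := by
        have h2α : (2 * α : ℝ) ≠ 0 := by positivity
        have hεα : ε * (2 * α) = x * α - ψ α - B := div_mul_cancel₀ _ h2α
        nlinarith [mul_pos hεpos hαpos]
      calc (B : EReal) < (((x - ε) * α - ψ α : ℝ) : EReal) := EReal.coe_lt_coe_iff.mpr hBlt
        _ ≤ _ := key ε hεpos

private lemma psi_continuousOn (ψ : ℝ → ℝ) (hψ1 : ψ 1 = 0)
    (hmono : MonotoneOn (fun α => ψ α / (α - 1)) (Set.Ioi (1 : ℝ)))
    (hbdd : BddBelow ((fun α => ψ α / (α - 1)) '' Set.Ioi (1 : ℝ))) :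
    ContinuousOn (fun c : ℝ => PsiE ψ c) {c : ℝ | (c : EReal) ≤ DinfE ψ} := by
  set U : Set ℝ := {c : ℝ | (c : EReal) < DinfE ψ} with hU
  have hUopen : IsOpen U := isOpen_Iio.preimage continuous_coe_real_ereal
  have hUord : U.OrdConnected := by
    refine ⟨fun x hx y hy z hz => ?_⟩
    exact lt_of_le_of_lt (EReal.coe_le_coe_iff.mpr hz.2) hy
  have hUconv : Convex ℝ U := hUord.convex
  set mf : ℝ → ℝ := fun c => (PsimE ψ c).toReal with hmf
  have hcoe : ∀ c ∈ U, PsimE ψ c = ((mf c : ℝ) : EReal) := fun c hc =>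
    psim_coe ψ hψ1 hmono hbdd hc
  have hconv : ConvexOn ℝ U mf := by
    refine ⟨hUconv, fun c hc c' hc' a b ha hb hab => ?_⟩
    have hle : PsimE ψ (a • c + b • c') ≤ ((a * mf c + b * mf c' : ℝ) : EReal) := by
      refine iSup₂_le fun α hα => ?_
      rw [EReal.coe_le_coe_iff]
      have h1 : c * (α - 1) - ψ α ≤ mf c :=
        EReal.coe_le_coe_iff.mp ((term_le_psim ψ c hα).trans_eq (hcoe c hc))
      have h2 : c' * (α - 1) - ψ α ≤ mf c' :=
        EReal.coe_le_coe_iff.mp ((term_le_psim ψ c' hα).trans_eq (hcoe c' hc'))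
      have hb' : b = 1 - a := by linarith
      have hid : (a • c + b • c') * (α - 1) - ψ α
          = a * (c * (α - 1) - ψ α) + b * (c' * (α - 1) - ψ α) := by
        simp only [smul_eq_mul, hb']; ring
      rw [hid]
      exact add_le_add (mul_le_mul_of_nonneg_left h1 ha) (mul_le_mul_of_nonneg_left h2 hb)
    have := EReal.toReal_le_toReal hle (psim_ne_bot ψ hψ1 _) (EReal.coe_ne_top _)
    rw [EReal.toReal_coe] at this
    simpa [smul_eq_mul] using this
  have hmcont : ContinuousOn mf U := hconv.continuousOn hUopen
  have hPsiU : ContinuousOn (fun c : ℝ => PsiE ψ c) U := by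
    have hc2 : ContinuousOn (fun c : ℝ => (((c + mf c : ℝ)) : EReal)) U :=
      continuous_coe_real_ereal.comp_continuousOn (continuousOn_id.add hmcont)
    refine hc2.congr fun c hc => ?_
    rw [psi_eq_add, hcoe c hc, ← EReal.coe_add]
  intro x hx
  have hx' : (x : EReal) ≤ DinfE ψ := hx
  rcases lt_or_eq_of_le hx' with hlt | heq
  · exact (hPsiU.continuousAt (hUopen.mem_nhds hlt)).continuousWithinAt
  · have hset : {c : ℝ | (c : EReal) ≤ DinfE ψ} = Set.Iic x := by
      ext y
      simp only [mem_setOf_eq, mem_Iic, ← heq, EReal.coe_le_coe_iff]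
    rw [hset]
    have h2 : ContinuousWithinAt (fun c : ℝ => PsiE ψ c) (Set.Iio x) x := by
      have h1 := (psi_monotone ψ).tendsto_nhdsLT x
      rwa [psi_sup_Iio] at h1
    have h3 : ContinuousWithinAt (fun c : ℝ => PsiE ψ c) {x} x := continuousWithinAt_singleton
    have h4 := h2.union h3
    have h5 : Set.Iio x ∪ {x} = Set.Iic x := by
      ext y; simp [le_iff_lt_or_eq]
    rwa [h5] at h4

/-- `Ψ` is strictly increasing and continuous on `(−∞, D∞]`, and for
`r ∈ (r₁⁺, r∞)` (where `r₁⁺ = D₁⁺` and `r∞ = lim_{c↗D∞} Ψ(c)`) one has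
`Ψ̃(r) = r − Ψ⁻¹(r) = Ψ⁻(Ψ⁻¹(r))`, `Ψ⁻¹` being the inverse of `Ψ` on `(−∞, D∞]`. -/
theorem stmt15 (ψ : ℝ → ℝ) (hψ1 : ψ 1 = 0)
    (hmono : MonotoneOn (fun α => ψ α / (α - 1)) (Set.Ioi (1 : ℝ)))
    (hbdd : BddBelow ((fun α => ψ α / (α - 1)) '' Set.Ioi (1 : ℝ))) :
    StrictMonoOn (fun c : ℝ => PsiE ψ c) {c : ℝ | (c : EReal) ≤ DinfE ψ} ∧
    ContinuousOn (fun c : ℝ => PsiE ψ c) {c : ℝ | (c : EReal) ≤ DinfE ψ} ∧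
    ∀ r : ℝ, sInf ((fun α => ψ α / (α - 1)) '' Set.Ioi (1 : ℝ)) < r →
      (r : EReal) < (⨆ c ∈ {c : ℝ | (c : EReal) < DinfE ψ}, PsiE ψ c) →
      ∃ c : ℝ, (c : EReal) ≤ DinfE ψ ∧ PsiE ψ c = (r : EReal) ∧
        (∀ c' : ℝ, (c' : EReal) ≤ DinfE ψ → PsiE ψ c' = (r : EReal) → c' = c) ∧
        tPsi ψ r = r - c ∧ ((tPsi ψ r : ℝ) : EReal) = PsimE ψ c := by
  refine ⟨psi_strictMono ψ hψ1 hmono hbdd, psi_continuousOn ψ hψ1 hmono hbdd, ?_⟩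
  intro r hr1 hr2
  set m₀ : ℝ := sInf ((fun α => ψ α / (α - 1)) '' Set.Ioi (1 : ℝ)) with hm₀def
  -- `Ψ(m₀) = m₀`
  have hpsim0 : PsimE ψ m₀ = 0 := by
    refine le_antisymm ?_ (psim_nonneg ψ hψ1 m₀)
    refine iSup₂_le fun α hα => ?_
    have hα1 : (1:ℝ) ≤ α := hα
    rcases eq_or_lt_of_le hα1 with h | h
    · rw [← h]
      norm_num [hψ1]
    · have h0 : α - 1 ≠ 0 := by linarith
      have hψα : (α - 1) * (ψ α / (α - 1)) = ψ α := by field_simp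
      have hm₀le : m₀ ≤ ψ α / (α - 1) := csInf_le hbdd ⟨α, h, rfl⟩
      have hneg : m₀ * (α - 1) - ψ α ≤ 0 := by nlinarith
      calc ((m₀ * (α - 1) - ψ α : ℝ) : EReal) ≤ ((0:ℝ) : EReal) :=
            EReal.coe_le_coe_iff.mpr hneg
        _ = 0 := by norm_num
  have hpsim₀ : PsiE ψ m₀ = (m₀ : EReal) := by rw [psi_eq_add, hpsim0, add_zero]
  obtain ⟨c₁, hc₁U, hrc₁⟩ := lt_biSup_iff.mp hr2
  have hc₁U' : (c₁ : EReal) < DinfE ψ := hc₁U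
  have hm₀c₁ : m₀ ≤ c₁ := by
    by_contra hcon
    push_neg at hcon
    have hmle := psi_monotone ψ hcon.le
    simp only at hmle
    rw [hpsim₀] at hmle
    have h2 : (r : EReal) < (m₀ : EReal) := lt_of_lt_of_le hrc₁ hmle
    rw [EReal.coe_lt_coe_iff] at h2
    linarith
  have hsub : Set.Icc m₀ c₁ ⊆ {c : ℝ | (c : EReal) ≤ DinfE ψ} := fun y hy =>
    le_trans (EReal.coe_le_coe_iff.mpr hy.2) hc₁U'.le
  have hcont := (psi_continuousOn ψ hψ1 hmono hbdd).mono hsub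
  have hIcc := intermediate_value_Icc hm₀c₁ hcont
  have hrmem : (r : EReal) ∈ Set.Icc (PsiE ψ m₀) (PsiE ψ c₁) := by
    rw [hpsim₀]
    exact ⟨EReal.coe_le_coe_iff.mpr hr1.le, hrc₁.le⟩
  obtain ⟨c, hcIcc, hc⟩ := hIcc hrmem
  simp only at hc
  have hcd : (c : EReal) < DinfE ψ := by
    rcases eq_or_lt_of_le hcIcc.2 with h | h
    · exfalso
      rw [h] at hc
      rw [hc] at hrc₁
      exact lt_irrefl _ hrc₁
    · exact lt_trans (EReal.coe_lt_coe_iff.mpr h) hc₁U'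
  have uniq : ∀ c' : ℝ, (c' : EReal) ≤ DinfE ψ → PsiE ψ c' = (r : EReal) → c' = c := by
    intro c' hc'd hc'eq
    exact (psi_strictMono ψ hψ1 hmono hbdd).injOn hc'd hcd.le (by show PsiE ψ c' = PsiE ψ c; rw [hc'eq, hc])
  set m : ℝ := (PsimE ψ c).toReal with hmdef
  have hcoe : PsimE ψ c = (m : EReal) := psim_coe ψ hψ1 hmono hbdd hcd
  have hrcm : r = c + m := by
    have h5 : ((c + m : ℝ) : EReal) = (r : EReal) := by
      rw [EReal.coe_add, ← hcoe, ← psi_eq_add]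
      exact hc
    exact_mod_cast h5.symm
  have hm0 : 0 ≤ m := by
    have h6 := psim_nonneg ψ hψ1 c
    rw [hcoe] at h6
    exact_mod_cast h6
  have hFle : ∀ α, 1 ≤ α → c * (α - 1) - ψ α ≤ m := fun α hα =>
    EReal.coe_le_coe_iff.mp ((term_le_psim ψ c hα).trans_eq hcoe)
  have hEx : ∀ w, w < m → ∃ α, 1 ≤ α ∧ w < c * (α - 1) - ψ α := by
    intro w hw
    have h7 : (w : EReal) < PsimE ψ c := by
      rw [hcoe]; exact_mod_cast hw
    obtain ⟨α, hα, h⟩ := lt_biSup_iff.mp h7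
    exact ⟨α, hα, EReal.coe_lt_coe_iff.mp h⟩
  have htPsi : tPsi ψ r = m := by
    apply csSup_eq_of_forall_le_of_forall_lt_exists_gt
    · exact ⟨_, mem_image_of_mem _ (show (0:ℝ) ∈ Set.Ico (0:ℝ) 1 by constructor <;> norm_num)⟩
    · rintro _ ⟨u, ⟨hu0, hu1⟩, rfl⟩
      simp only [psit]
      set t : ℝ := 1 - u with htdef
      have ht : 0 < t := by rw [htdef]; linarith
      have ht1 : t ≤ 1 := by rw [htdef]; linarith
      have h1 : t * (1/t) = 1 := by field_simp
      have hinv : (1:ℝ) ≤ 1 / t := by nlinarith [h1, ht, ht1]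
      have hF := hFle (1/t) hinv
      have key : c * (1 - t) - t * ψ (1/t) ≤ t * m := by
        have h2 := mul_le_mul_of_nonneg_left hF ht.le
        have h3 : t * (c * (1/t - 1) - ψ (1/t)) = c * (t * (1/t)) - t * c - t * ψ (1/t) := by
          ring
        rw [h3, h1, mul_one] at h2
        linarith
      have hu : u = 1 - t := by rw [htdef]; ring
      rw [hu, hrcm]
      nlinarith [key]
    · intro w hw
      obtain ⟨α, hα, hwF⟩ := hEx w hw
      have hαpos : (0:ℝ) < α := lt_of_lt_of_le one_pos hα
      have hcc : α * α⁻¹ = 1 := mul_inv_cancel₀ (ne_of_gt hαpos)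
      have hαinvpos : 0 < α⁻¹ := inv_pos.mpr hαpos
      have hαinv1 : α⁻¹ ≤ 1 := by nlinarith [mul_nonneg hαinvpos.le (by linarith : (0:ℝ) ≤ α - 1)]
      refine ⟨_, mem_image_of_mem _ (show (1 - α⁻¹) ∈ Set.Ico (0:ℝ) 1 from
        ⟨by linarith, by linarith⟩), ?_⟩
      show w < (1 - α⁻¹) * r - psit ψ (1 - α⁻¹)
      have h1u : (1:ℝ) - (1 - α⁻¹) = α⁻¹ := by ring
      have hps : psit ψ (1 - α⁻¹) = α⁻¹ * ψ α := by
        rw [psit, h1u, one_div, inv_inv]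
      rw [hps]
      have hv : α * ((1 - α⁻¹) * r - α⁻¹ * ψ α) = (α - 1) * r - ψ α := by
        linear_combination (-r - ψ α) * hcc
      have h2 : α * w < (α - 1) * r - ψ α := by
        have h3 : (α - 1) * w ≤ (α - 1) * m := mul_le_mul_of_nonneg_left hw.le (by linarith)
        rw [hrcm]
        nlinarith [hwF, h3]
      have h4 : α * w < α * ((1 - α⁻¹) * r - α⁻¹ * ψ α) := by rw [hv]; exact h2
      exact lt_of_mul_lt_mul_left h4 hαpos.le
  exact ⟨c, hcd.le, hc, uniq, by rw [htPsi]; linarith, by rw [htPsi, hcoe]⟩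
end

section
/- Let X be a finite set, σ ∈ S(X) a probability distribution, and for r > 0 define B_{n,r} := {x ∈ Xⁿ : D(P_x‖σ) ≥ r}, where P_x is the empirical distribution (type) of x. Then σ^{⊗n}(B_{n,r}) ≤ (n+1)^{|X|} e^{−nr} for every n ∈ ℕ. -/
open Finset

/-- Relative entropy of two distributions on a finite type, with values in `EReal`
(`0 log 0 = 0`, and `+∞` if the support of `p` is not contained in that of `q`). -/
noncomputable def klE {X : Type*} [Fintype X] (p q : X → ℝ) : EReal :=
  ∑ x, if p x = 0 then (0 : EReal)
       else if q x = 0 then (⊤ : EReal)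
       else ((p x * Real.log (p x / q x) : ℝ) : EReal)

/-- The empirical distribution (type) of a string `x ∈ Xⁿ`. -/
noncomputable def empDist {X : Type*} [Fintype X] [DecidableEq X] {n : ℕ}
    (x : Fin n → X) (y : X) : ℝ :=
  (Finset.univ.filter (fun i => x i = y)).card / n

section Aux


lemma aux_ereal_coe_sum {α : Type*} (s : Finset α) (f : α → ℝ) :
    ((∑ a ∈ s, f a : ℝ) : EReal) = ∑ a ∈ s, (f a : EReal) :=
  map_sum (⟨⟨Real.toEReal, EReal.coe_zero⟩, EReal.coe_add⟩ : ℝ →+ EReal) f s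

variable {X : Type*} [Fintype X] [DecidableEq X] {n : ℕ}

lemma aux_prod_comp (x : Fin n → X) (f : X → ℝ) :
    ∏ i, f (x i) = ∏ y, f y ^ (Finset.univ.filter (fun i => x i = y)).card := by
  rw [← Finset.prod_fiberwise_of_maps_to (g := x) (fun i _ => Finset.mem_univ (x i))]
  refine Finset.prod_congr rfl fun y _ => ?_
  rw [Finset.prod_congr rfl (fun i hi => by rw [(Finset.mem_filter.mp hi).2]),
    Finset.prod_const]

lemma aux_sum_count (x : Fin n → X) :
    ∑ y, (Finset.univ.filter (fun i => x i = y)).card = n := by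
  rw [← Finset.card_eq_sum_card_fiberwise (fun i _ => Finset.mem_univ (x i)),
    Finset.card_univ, Fintype.card_fin]

lemma aux_stepB (hn : 0 < n) :
    ∑ x : Fin n → X, ∏ i, empDist x (x i) ≤ ((n + 1 : ℝ)) ^ Fintype.card X := by
  classical
  set c : (Fin n → X) → (X → ℕ) := fun x y => (Finset.univ.filter (fun i => x i = y)).card
    with hc
  set K : Finset (X → ℕ) :=
    (Fintype.piFinset fun _ : X => Finset.range (n + 1)).filter (fun k => ∑ y, k y = n) with hK
  have hmap : ∀ x : Fin n → X, x ∈ (Finset.univ : Finset (Fin n → X)) → c x ∈ K := by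
    intro x _
    rw [hK, Finset.mem_filter, Fintype.mem_piFinset]
    refine ⟨fun y => ?_, aux_sum_count x⟩
    rw [Finset.mem_range, Nat.lt_succ_iff]
    calc ((Finset.univ.filter (fun i => x i = y)).card)
        ≤ (Finset.univ : Finset (Fin n)).card := Finset.card_filter_le _ _
      _ = n := by simp
  rw [← Finset.sum_fiberwise_of_maps_to hmap]
  have hinner : ∀ k ∈ K,
      ∑ x ∈ Finset.univ.filter (fun x : Fin n → X => c x = k), ∏ i, empDist x (x i)
        ≤ 1 := by
    intro k hk
    rw [hK, Finset.mem_filter] at hk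
    have h1 : ∑ x ∈ Finset.univ.filter (fun x : Fin n → X => c x = k),
        ∏ i, empDist x (x i)
        = ∑ x ∈ Finset.univ.filter (fun x : Fin n → X => c x = k),
            ∏ i, ((k (x i) : ℝ) / n) := by
      refine Finset.sum_congr rfl fun x hx => ?_
      have hcx : c x = k := (Finset.mem_filter.mp hx).2
      refine Finset.prod_congr rfl fun i _ => ?_
      rw [empDist, ← hcx]
    rw [h1]
    have h2 : ∑ x ∈ Finset.univ.filter (fun x : Fin n → X => c x = k),
        ∏ i, ((k (x i) : ℝ) / n)
        ≤ ∑ x : Fin n → X, ∏ i, ((k (x i) : ℝ) / n) := by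
      refine Finset.sum_le_sum_of_subset_of_nonneg (Finset.filter_subset _ _)
        fun x _ _ => Finset.prod_nonneg fun i _ =>
          div_nonneg (Nat.cast_nonneg _) (Nat.cast_nonneg _)
    refine h2.trans ?_
    have h3 : ∑ x : Fin n → X, ∏ i, ((k (x i) : ℝ) / n)
        = ∏ _i : Fin n, ∑ y : X, ((k y : ℝ) / n) := by
      rw [← Finset.sum_prod_piFinset]
      rw [Fintype.piFinset_univ]
    rw [h3]
    have h4 : ∑ y : X, ((k y : ℝ) / n) = 1 := by
      rw [← Finset.sum_div]
      rw [show ∑ y, (k y : ℝ) = (n : ℝ) by exact_mod_cast congrArg Nat.cast hk.2]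
      exact div_self (by positivity)
    simp [h4]
  calc ∑ k ∈ K, ∑ x ∈ Finset.univ.filter (fun x : Fin n → X => c x = k),
        ∏ i, empDist x (x i)
      ≤ ∑ _k ∈ K, (1 : ℝ) := Finset.sum_le_sum hinner
    _ = K.card := by simp
    _ ≤ ((Fintype.piFinset fun _ : X => Finset.range (n + 1)).card : ℝ) := by
        exact_mod_cast Nat.cast_le.mpr (Finset.card_filter_le _ _)
    _ = ((n + 1 : ℝ)) ^ Fintype.card X := by
        rw [Fintype.card_piFinset]
        push_cast [Finset.card_range]
        simp

lemma aux_pointwise (σ : X → ℝ) (hσ0 : ∀ x, 0 ≤ σ x) (r : ℝ) (hn : 0 < n)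
    (x : Fin n → X) :
    (if (r : EReal) ≤ klE (empDist x) σ then ∏ i, σ (x i) else 0)
      ≤ Real.exp (-(n : ℝ) * r) * ∏ i, empDist x (x i) := by
  classical
  have hP0 : ∀ y, 0 ≤ empDist x y := fun y =>
    div_nonneg (Nat.cast_nonneg _) (Nat.cast_nonneg _)
  have hprodP : 0 ≤ ∏ i, empDist x (x i) := Finset.prod_nonneg fun i _ => hP0 _
  have hRHS : 0 ≤ Real.exp (-(n : ℝ) * r) * ∏ i, empDist x (x i) :=
    mul_nonneg (Real.exp_pos _).le hprodP
  split_ifs with h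
  swap
  · exact hRHS
  by_cases hzero : ∃ i, σ (x i) = 0
  · obtain ⟨i, hi⟩ := hzero
    rw [Finset.prod_eq_zero (Finset.mem_univ i) hi]
    exact hRHS
  push_neg at hzero
  -- the count of each y present in x is positive, and σ positive there
  have hσy : ∀ y, empDist x y ≠ 0 → σ y ≠ 0 := by
    intro y hy
    have : (Finset.univ.filter (fun i => x i = y)).card ≠ 0 := by
      intro h0
      apply hy
      rw [empDist, h0]
      simp
    obtain ⟨i, hi⟩ := Finset.card_ne_zero.mp this
    obtain hxi := (Finset.mem_filter.mp hi).2
    rw [← hxi]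
    exact hzero i
  set g : X → ℝ := fun y =>
    if empDist x y = 0 then 0 else empDist x y * Real.log (empDist x y / σ y) with hg
  have hklE : klE (empDist x) σ = ((∑ y, g y : ℝ) : EReal) := by
    rw [klE, aux_ereal_coe_sum]
    refine Finset.sum_congr rfl fun y _ => ?_
    by_cases hy : empDist x y = 0
    · simp [hg, hy]
    · simp [hg, hy, hσy y hy]
  rw [hklE, EReal.coe_le_coe_iff] at h
  -- product identity
  have key : ∏ i, σ (x i)
      = Real.exp (-(n : ℝ) * ∑ y, g y) * ∏ i, empDist x (x i) := by
    rw [aux_prod_comp x σ, aux_prod_comp x (empDist x)]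
    have hexp : Real.exp (-(n : ℝ) * ∑ y, g y) = ∏ y, Real.exp (-(n : ℝ) * g y) := by
      rw [← Real.exp_sum, ← Finset.mul_sum]
    rw [hexp, ← Finset.prod_mul_distrib]
    refine Finset.prod_congr rfl fun y _ => ?_
    by_cases hcy : (Finset.univ.filter (fun i => x i = y)).card = 0
    · have hPy : empDist x y = 0 := by rw [empDist, hcy]; simp
      simp [hcy, hg, hPy]
    · have hPy : empDist x y ≠ 0 := by
        rw [empDist]
        positivity
      have hPypos : 0 < empDist x y := (hP0 y).lt_of_ne' hPy
      have hσpos : 0 < σ y := (hσ0 y).lt_of_ne' (hσy y hPy)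
      have hgy : g y = empDist x y * Real.log (empDist x y / σ y) := by
        simp [hg, hPy]
      have hnP : (n : ℝ) * empDist x y
          = ((Finset.univ.filter (fun i => x i = y)).card : ℝ) := by
        rw [empDist, mul_div_cancel₀]
        positivity
      have : -(n : ℝ) * g y
          = ((Finset.univ.filter (fun i => x i = y)).card : ℝ)
              * Real.log (σ y / empDist x y) := by
        rw [hgy, Real.log_div (ne_of_gt hσpos) hPy, Real.log_div hPy (ne_of_gt hσpos)]
        rw [← hnP]
        ring
      rw [this, Real.exp_nat_mul, Real.exp_log (div_pos hσpos hPypos), ← mul_pow,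
        div_mul_cancel₀ _ (ne_of_gt hPypos)]
  rw [key]
  refine mul_le_mul_of_nonneg_right ?_ hprodP
  rw [Real.exp_le_exp]
  rw [neg_mul, neg_mul, neg_le_neg_iff]
  exact mul_le_mul_of_nonneg_left h (Nat.cast_nonneg n)

end Aux

open Classical in
/-- Method-of-types bound: the `σ^{⊗n}`-probability of the set of strings whose type `P_x`
satisfies `D(P_x‖σ) ≥ r` is at most `(n+1)^{|X|} e^{−nr}`. -/
theorem stmt18 {X : Type*} [Fintype X] [DecidableEq X] (σ : X → ℝ)
    (hσ : (∀ x, 0 ≤ σ x) ∧ ∑ x, σ x = 1) (r : ℝ) (hr : 0 < r) (n : ℕ) :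
    ∑ x : Fin n → X,
        (if (r : EReal) ≤ klE (empDist x) σ then ∏ i, σ (x i) else 0) ≤
      (n + 1 : ℝ) ^ (Fintype.card X) * Real.exp (-(n : ℝ) * r) := by
  obtain ⟨hσ0, hσ1⟩ := hσ
  rcases Nat.eq_zero_or_pos n with hn | hn
  · subst hn
    have hcond : ∀ x : Fin 0 → X, ¬ ((r : EReal) ≤ klE (empDist x) σ) := by
      intro x
      have h0 : klE (empDist x) σ = 0 := by
        simp [klE, empDist]
      rw [h0]
      rw [show (0 : EReal) = ((0 : ℝ) : EReal) by simp, EReal.coe_le_coe_iff]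
      exact not_le.mpr hr
    rw [Finset.sum_congr rfl fun x _ => if_neg (hcond x), Finset.sum_const]
    simp
  · calc ∑ x : Fin n → X,
        (if (r : EReal) ≤ klE (empDist x) σ then ∏ i, σ (x i) else 0)
        ≤ ∑ x : Fin n → X, Real.exp (-(n : ℝ) * r) * ∏ i, empDist x (x i) :=
          Finset.sum_le_sum fun x _ => aux_pointwise σ hσ0 r hn x
      _ = Real.exp (-(n : ℝ) * r) * ∑ x : Fin n → X, ∏ i, empDist x (x i) := by
          rw [← Finset.mul_sum]
      _ ≤ Real.exp (-(n : ℝ) * r) * ((n + 1 : ℝ) ^ Fintype.card X) :=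
          mul_le_mul_of_nonneg_left (aux_stepB hn) (Real.exp_pos _).le
      _ = _ := mul_comm _ _
end

section
/- Let X be a finite set and ρ₁, ρ₂, σ probability distributions on X with supp ρ₁ ∪ supp ρ₂ ⊆ supp σ. Then |D(ρ₁‖σ) − D(ρ₂‖σ)| ≤ (1/2)‖ρ₁−ρ₂‖₁ log(|X|−1) + h₂((1/2)‖ρ₁−ρ₂‖₁) + ‖ρ₁−ρ₂‖₁ · (−log min_{x ∈ supp ρ₁ ∪ supp ρ₂} σ(x)), where h₂(t) := −t log t − (1−t) log(1−t) is the binary entropy and ‖p−q‖₁ := Σ_x |p(x)−q(x)|. -/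
open Finset

/-- Kullback–Leibler divergence of two distributions on a finite type
(with the convention `0 log 0 = 0`). -/
noncomputable def klDiv' {X : Type*} [Fintype X] (p q : X → ℝ) : ℝ :=
  ∑ x, if p x = 0 then 0 else p x * Real.log (p x / q x)

/-- Binary entropy. -/
noncomputable def h2 (t : ℝ) : ℝ :=
  -t * Real.log t - (1 - t) * Real.log (1 - t)

section Aux

open Real

variable {X : Type*} [Fintype X]


lemma subaddNML {a m : ℝ} (ha : 0 ≤ a) (hm : 0 ≤ m) :
    negMulLog (m + a) ≤ negMulLog m + negMulLog a := by
  rcases ha.eq_or_lt with h | h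
  · simp [← h]
  rcases hm.eq_or_lt with h' | h'
  · simp [← h']
  have h1 : Real.log m ≤ Real.log (m + a) := Real.log_le_log h' (by linarith)
  have h2 : Real.log a ≤ Real.log (m + a) := Real.log_le_log h (by linarith)
  simp only [negMulLog, neg_mul]
  nlinarith

lemma maxEnt (A : Finset X) (u : X → ℝ) (h0 : ∀ x, 0 ≤ u x)
    (hA : ∀ x ∉ A, u x = 0) (h1 : ∑ x, u x = 1) :
    ∑ x, negMulLog (u x) ≤ Real.log A.card := by
  have hsum : ∀ f : X → ℝ, (∀ x ∉ A, f x = 0) → ∑ x ∈ A, f x = ∑ x, f x :=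
    fun f hf => Finset.sum_subset (Finset.subset_univ A) (fun x _ hx => hf x hx)
  have hA1 : ∑ x ∈ A, u x = 1 := by rw [hsum u hA]; exact h1
  have hApos : (0 : ℝ) < A.card := by
    rcases A.eq_empty_or_nonempty with h | h
    · simp [h] at hA1
    · exact_mod_cast Finset.card_pos.2 h
  have key : ∀ x ∈ A, negMulLog (u x) ≤ u x * Real.log A.card + ((A.card : ℝ)⁻¹ - u x) := by
    intro x _
    rcases (h0 x).eq_or_lt with h | h
    · rw [← h, negMulLog_zero]; simp; all_goals positivity
    · have hcu : (0 : ℝ) < A.card * u x := by positivity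
      have hlog : Real.log ((A.card * u x)⁻¹) ≤ (A.card * u x)⁻¹ - 1 :=
        Real.log_le_sub_one_of_pos (by positivity)
      rw [Real.log_inv] at hlog
      have : Real.log (A.card * u x) = Real.log A.card + Real.log (u x) :=
        Real.log_mul (by positivity) h.ne'
      rw [this] at hlog
      have h5 : u x * ((A.card : ℝ) * u x)⁻¹ = (A.card : ℝ)⁻¹ := by
        field_simp
      have h6 := mul_le_mul_of_nonneg_left hlog (h0 x)
      simp only [negMulLog, neg_mul]
      nlinarith [h5, h6]
  calc ∑ x, negMulLog (u x) = ∑ x ∈ A, negMulLog (u x) := by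
        rw [hsum _ (fun x hx => by rw [hA x hx]; simp)]
    _ ≤ ∑ x ∈ A, (u x * Real.log A.card + ((A.card : ℝ)⁻¹ - u x)) :=
        Finset.sum_le_sum key
    _ = Real.log A.card := by
        rw [Finset.sum_add_distrib, ← Finset.sum_mul, hA1, Finset.sum_sub_distrib, hA1]
        simp [Finset.sum_const, mul_comm]
        field_simp
        norm_num

lemma sumNML_nonneg (q : X → ℝ) (h0 : ∀ x, 0 ≤ q x) (h1 : ∑ x, q x = 1) :
    0 ≤ ∑ x, negMulLog (q x) := by
  apply Finset.sum_nonneg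
  intro x _
  exact negMulLog_nonneg (h0 x) (by
    calc q x ≤ ∑ y, q y := Finset.single_le_sum (fun y _ => h0 y) (Finset.mem_univ x)
    _ = 1 := h1)

lemma lowerEnt (q m : X → ℝ) (hm0 : ∀ x, 0 ≤ m x) (hmq : ∀ x, m x ≤ q x)
    (hq1 : ∑ x, q x = 1) :
    ∑ x, negMulLog (m x) + (∑ x, m x) * Real.log (∑ x, m x) ≤ ∑ x, negMulLog (q x) := by
  set s := ∑ x, m x with hs
  have hs0 : 0 ≤ s := Finset.sum_nonneg fun x _ => hm0 x
  have hq0 : ∀ x, 0 ≤ q x := fun x => (hm0 x).trans (hmq x)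
  have hs1 : s ≤ 1 := by rw [hs, ← hq1]; exact Finset.sum_le_sum fun x _ => hmq x
  rcases hs0.eq_or_lt with h0 | h0
  · have hmz : ∀ x, m x = 0 := by
      intro x
      have := (Finset.sum_eq_zero_iff_of_nonneg (fun y _ => hm0 y)).1 h0.symm
      exact this x (Finset.mem_univ x)
    have : ∑ x, negMulLog (m x) = 0 := Finset.sum_eq_zero fun x _ => by rw [hmz x]; simp
    rw [this, ← h0]
    simpa using sumNML_nonneg q hq0 hq1
  rcases hs1.eq_or_lt with h1 | h1
  · have hmq' : ∀ x, m x = q x := by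
      have hz : ∑ x, (q x - m x) = 0 := by
        rw [Finset.sum_sub_distrib, hq1, ← hs, h1, sub_self]
      intro x
      have := (Finset.sum_eq_zero_iff_of_nonneg (fun y _ => sub_nonneg.2 (hmq y))).1 hz
      have := this x (Finset.mem_univ x)
      linarith [sub_eq_zero.1 this]
    have : ∀ x, negMulLog (m x) = negMulLog (q x) := fun x => by rw [hmq' x]
    rw [Finset.sum_congr rfl (fun x _ => this x), h1]
    simp
  -- main case 0 < s < 1
  have key : ∀ x, negMulLog (m x) - m x * (negMulLog s / s) ≤ negMulLog (q x) := by
    intro x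
    have hb0 : 0 ≤ q x - m x := sub_nonneg.2 (hmq x)
    have hb1 : q x - m x ≤ 1 - s := by
      have : q x - m x ≤ ∑ y, (q y - m y) :=
        Finset.single_le_sum (fun y _ => sub_nonneg.2 (hmq y)) (Finset.mem_univ x)
      rw [Finset.sum_sub_distrib, hq1, ← hs] at this
      linarith
    have h1s : (1:ℝ) - s ≠ 0 := by linarith
    have hc := concaveOn_negMulLog.2 (Set.mem_Ici.2 (div_nonneg (hm0 x) hs0))
      (Set.mem_Ici.2 (div_nonneg hb0 (by linarith : (0:ℝ) ≤ 1 - s)))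
      hs0 (by linarith : (0:ℝ) ≤ 1 - s) (by ring)
    have e1 : s • (m x / s) + (1 - s) • ((q x - m x) / (1 - s)) = q x := by
      simp only [smul_eq_mul]
      field_simp
      ring
    rw [e1] at hc
    have e2 : negMulLog (m x) = (m x / s) * negMulLog s + s * negMulLog (m x / s) := by
      have := negMulLog_mul s (m x / s)
      rw [show s * (m x / s) = m x by field_simp] at this
      exact this
    have e3 : 0 ≤ negMulLog ((q x - m x) / (1 - s)) :=
      negMulLog_nonneg (div_nonneg hb0 (by linarith : (0:ℝ) ≤ 1 - s)) (by rw [div_le_one (by linarith)]; exact hb1)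
    have hms : m x / s * negMulLog s = m x * (negMulLog s / s) := by ring
    simp only [smul_eq_mul] at hc
    nlinarith [hc, e2, e3, hms, mul_nonneg (by linarith : (0:ℝ) ≤ 1 - s) e3]
  calc ∑ x, negMulLog (m x) + s * Real.log s
      = ∑ x, (negMulLog (m x) - m x * (negMulLog s / s)) := by
        have hns : s * (negMulLog s / s) = negMulLog s := by field_simp
        rw [Finset.sum_sub_distrib, ← Finset.sum_mul, ← hs, hns, negMulLog]
        ring
    _ ≤ ∑ x, negMulLog (q x) := Finset.sum_le_sum fun x _ => key x

lemma upperEnt (p m : X → ℝ) (A : Finset X) (hm0 : ∀ x, 0 ≤ m x) (hmp : ∀ x, m x ≤ p x)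
    (hA : ∀ x ∉ A, p x - m x = 0) (ht : 0 < ∑ x, (p x - m x)) :
    ∑ x, negMulLog (p x) ≤ ∑ x, negMulLog (m x) +
      (∑ x, (p x - m x)) * Real.log A.card + negMulLog (∑ x, (p x - m x)) := by
  set t := ∑ x, (p x - m x) with htdef
  have step1 : ∑ x, negMulLog (p x) ≤ ∑ x, negMulLog (m x) + ∑ x, negMulLog (p x - m x) := by
    rw [← Finset.sum_add_distrib]
    apply Finset.sum_le_sum
    intro x _
    have := subaddNML (sub_nonneg.2 (hmp x)) (hm0 x)
    rwa [show m x + (p x - m x) = p x by ring] at this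
  have step2 : ∑ x, negMulLog (p x - m x) =
      negMulLog t + t * ∑ x, negMulLog ((p x - m x) / t) := by
    have : ∀ x, negMulLog (p x - m x) =
        (p x - m x) / t * negMulLog t + t * negMulLog ((p x - m x) / t) := by
      intro x
      have := negMulLog_mul t ((p x - m x) / t)
      rw [show t * ((p x - m x) / t) = p x - m x by field_simp] at this
      exact this
    rw [Finset.sum_congr rfl (fun x _ => this x), Finset.sum_add_distrib, ← Finset.sum_mul,
      ← Finset.sum_div, ← htdef, div_self ht.ne', one_mul, Finset.mul_sum]
  have step3 : ∑ x, negMulLog ((p x - m x) / t) ≤ Real.log A.card := by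
    apply maxEnt A _ (fun x => div_nonneg (sub_nonneg.2 (hmp x)) ht.le)
    · intro x hx; rw [hA x hx]; simp
    · rw [← Finset.sum_div, ← htdef, div_self ht.ne']
  calc ∑ x, negMulLog (p x) ≤ ∑ x, negMulLog (m x) + ∑ x, negMulLog (p x - m x) := step1
    _ = ∑ x, negMulLog (m x) + (negMulLog t + t * ∑ x, negMulLog ((p x - m x) / t)) := by
        rw [step2]
    _ ≤ ∑ x, negMulLog (m x) + (negMulLog t + t * Real.log A.card) := by
        have := mul_le_mul_of_nonneg_left step3 ht.le
        linarith
    _ = _ := by ring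


lemma fannes (p q : X → ℝ) (hp0 : ∀ x, 0 ≤ p x) (hp1 : ∑ x, p x = 1)
    (hq0 : ∀ x, 0 ≤ q x) (hq1 : ∑ x, q x = 1) :
    ∑ x, negMulLog (p x) - ∑ x, negMulLog (q x) ≤
      (1 / 2) * (∑ x, |p x - q x|) * Real.log (Fintype.card X - 1) +
        h2 ((1 / 2) * ∑ x, |p x - q x|) := by
  classical
  set t := (1 / 2) * ∑ x, |p x - q x| with htdef
  set m := fun x => min (p x) (q x) with hmdef
  have hm0 : ∀ x, 0 ≤ m x := fun x => le_min (hp0 x) (hq0 x)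
  have habs : ∀ x, |p x - q x| = p x + q x - 2 * m x := by
    intro x
    rcases le_total (p x) (q x) with h | h
    · rw [abs_of_nonpos (by linarith)]; simp only [hmdef, min_eq_left h]; ring
    · rw [abs_of_nonneg (by linarith)]; simp only [hmdef, min_eq_right h]; ring
  have hmt : ∑ x, m x = 1 - t := by
    have hh : ∑ x, |p x - q x| = 2 - 2 * ∑ x, m x := by
      rw [Finset.sum_congr rfl (fun x _ => habs x)]
      rw [Finset.sum_sub_distrib, Finset.sum_add_distrib, hp1, hq1, ← Finset.mul_sum]
      ring
    rw [htdef, hh]; ring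
  have ht0 : 0 ≤ t := by
    rw [htdef]
    have : (0:ℝ) ≤ ∑ x, |p x - q x| := Finset.sum_nonneg fun x _ => abs_nonneg _
    linarith
  rcases ht0.eq_or_lt with h | h
  · -- t = 0 : p = q
    have hz : ∑ x, |p x - q x| = 0 := by
      have := htdef; rw [← h] at this; linarith
    have hpq : ∀ x, p x = q x := by
      intro x
      have h3 := (Finset.sum_eq_zero_iff_of_nonneg (fun y _ => abs_nonneg (p y - q y))).1 hz
      have := h3 x (Finset.mem_univ x)
      have := abs_eq_zero.1 this
      linarith
    have heq : ∑ x, negMulLog (p x) = ∑ x, negMulLog (q x) :=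
      Finset.sum_congr rfl (fun x _ => by rw [hpq x])
    rw [heq, ← h]
    simp [h2]
  · have hex : ∃ x₀, 0 < q x₀ - m x₀ := by
      by_contra hcon
      push_neg at hcon
      have : ∑ x, (q x - m x) ≤ 0 := Finset.sum_nonpos fun x _ => hcon x
      rw [Finset.sum_sub_distrib, hq1, hmt] at this
      linarith
    obtain ⟨x₀, hx₀⟩ := hex
    have hple : p x₀ ≤ q x₀ := by
      by_contra hc
      push_neg at hc
      have : m x₀ = q x₀ := by simp only [hmdef]; exact min_eq_right hc.le
      linarith
    have hmx : m x₀ = p x₀ := by simp only [hmdef]; exact min_eq_left hple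
    have hpx₀ : p x₀ - m x₀ = 0 := by rw [hmx, sub_self]
    set A := Finset.univ.erase x₀ with hAdef
    have hcard : (A.card : ℝ) = (Fintype.card X : ℝ) - 1 := by
      rw [hAdef, Finset.card_erase_of_mem (Finset.mem_univ x₀), Finset.card_univ]
      have h1 : 1 ≤ Fintype.card X := Fintype.card_pos_iff.2 ⟨x₀⟩
      push_cast [Nat.cast_sub h1]
      ring
    have hspm : ∑ x, (p x - m x) = t := by
      rw [Finset.sum_sub_distrib, hp1, hmt]; ring
    have hApx : ∀ x ∉ A, p x - m x = 0 := by
      intro x hx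
      have hxx : x = x₀ := by
        by_contra hne
        exact hx (Finset.mem_erase.2 ⟨hne, Finset.mem_univ x⟩)
      rw [hxx]; exact hpx₀
    have hupper := upperEnt p m A hm0 (fun x => min_le_left _ _) hApx (by rw [hspm]; exact h)
    rw [hspm, hcard] at hupper
    have hlower := lowerEnt q m hm0 (fun x => min_le_right _ _) hq1
    rw [hmt] at hlower
    have hnml : negMulLog t = -t * Real.log t := by rw [negMulLog]
    simp only [h2]
    linarith [hupper, hlower, hnml]

end Aux

/-- Continuity bound for the relative entropy with fixed second argument. -/
theorem stmt19 {X : Type*} [Fintype X] (ρ₁ ρ₂ σ : X → ℝ)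
    (hρ₁ : (∀ x, 0 ≤ ρ₁ x) ∧ ∑ x, ρ₁ x = 1)
    (hρ₂ : (∀ x, 0 ≤ ρ₂ x) ∧ ∑ x, ρ₂ x = 1)
    (hσ : (∀ x, 0 ≤ σ x) ∧ ∑ x, σ x = 1)
    (hsupp : ∀ x, (ρ₁ x ≠ 0 ∨ ρ₂ x ≠ 0) → σ x ≠ 0) :
    |klDiv' ρ₁ σ - klDiv' ρ₂ σ| ≤
      (1 / 2) * (∑ x, |ρ₁ x - ρ₂ x|) * Real.log (Fintype.card X - 1) +
        h2 ((1 / 2) * ∑ x, |ρ₁ x - ρ₂ x|) +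
        (∑ x, |ρ₁ x - ρ₂ x|) *
          (-Real.log (sInf (σ '' {x | ρ₁ x ≠ 0 ∨ ρ₂ x ≠ 0}))) := by
  obtain ⟨h10, h11⟩ := hρ₁
  obtain ⟨h20, h21⟩ := hρ₂
  obtain ⟨hσ0, hσ1⟩ := hσ
  -- rewrite KL divergences
  have hkl : ∀ ρ : X → ℝ, (∀ x, ρ x ≠ 0 → σ x ≠ 0) →
      klDiv' ρ σ = -(∑ x, Real.negMulLog (ρ x)) - ∑ x, ρ x * Real.log (σ x) := by
    intro ρ hρσ
    have : klDiv' ρ σ = ∑ x, (-Real.negMulLog (ρ x) - ρ x * Real.log (σ x)) := by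
      apply Finset.sum_congr rfl
      intro x _
      by_cases hx : ρ x = 0
      · simp [hx]
      · rw [if_neg hx, Real.log_div hx (hρσ x hx), Real.negMulLog]; ring
    rw [this, Finset.sum_sub_distrib, Finset.sum_neg_distrib]
  have hkl1 := hkl ρ₁ (fun x hx => hsupp x (Or.inl hx))
  have hkl2 := hkl ρ₂ (fun x hx => hsupp x (Or.inr hx))
  set S := {x | ρ₁ x ≠ 0 ∨ ρ₂ x ≠ 0} with hSdef
  set mval := sInf (σ '' S) with hmval
  -- facts about mval
  have hSne : S.Nonempty := by
    by_contra hcon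
    rw [Set.not_nonempty_iff_eq_empty] at hcon
    have : ∀ x, ρ₁ x = 0 := by
      intro x
      by_contra hx
      have : x ∈ S := Or.inl hx
      rw [hcon] at this
      exact this
    rw [Finset.sum_congr rfl (fun x _ => this x)] at h11
    simp at h11
  have himfin : (σ '' S).Finite := Set.toFinite _
  have hmem : mval ∈ σ '' S := Set.Nonempty.csInf_mem (hSne.image σ) himfin
  obtain ⟨x₀, hx₀S, hx₀⟩ := hmem
  have hm_pos : 0 < mval := by
    rw [← hx₀]
    exact (hσ0 x₀).lt_of_ne (Ne.symm (hsupp x₀ hx₀S))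
  have hσle1 : ∀ x, σ x ≤ 1 := by
    intro x
    calc σ x ≤ ∑ y, σ y := Finset.single_le_sum (fun y _ => hσ0 y) (Finset.mem_univ x)
      _ = 1 := hσ1
  have hm_le1 : mval ≤ 1 := by rw [← hx₀]; exact hσle1 x₀
  have hM0 : 0 ≤ -Real.log mval := by
    rw [neg_nonneg]; exact Real.log_nonpos hm_pos.le hm_le1
  have hle : ∀ x ∈ S, mval ≤ σ x := fun x hx =>
    csInf_le himfin.bddBelow ⟨x, hx, rfl⟩
  -- second term bound
  have hT2 : |∑ x, ρ₂ x * Real.log (σ x) - ∑ x, ρ₁ x * Real.log (σ x)| ≤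
      (∑ x, |ρ₁ x - ρ₂ x|) * (-Real.log mval) := by
    rw [← Finset.sum_sub_distrib]
    calc |∑ x, (ρ₂ x * Real.log (σ x) - ρ₁ x * Real.log (σ x))|
        ≤ ∑ x, |ρ₂ x * Real.log (σ x) - ρ₁ x * Real.log (σ x)| :=
          Finset.abs_sum_le_sum_abs _ _
      _ ≤ ∑ x, |ρ₁ x - ρ₂ x| * (-Real.log mval) := by
          apply Finset.sum_le_sum
          intro x _
          by_cases hxS : x ∈ S
          · have hσx : 0 < σ x := (hσ0 x).lt_of_ne (Ne.symm (hsupp x hxS))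
            have hlog : |Real.log (σ x)| ≤ -Real.log mval := by
              rw [abs_of_nonpos (Real.log_nonpos hσx.le (hσle1 x)), neg_le_neg_iff]
              exact Real.log_le_log hm_pos (hle x hxS)
            have : ρ₂ x * Real.log (σ x) - ρ₁ x * Real.log (σ x) =
                (ρ₂ x - ρ₁ x) * Real.log (σ x) := by ring
            rw [this, abs_mul, abs_sub_comm (ρ₂ x) (ρ₁ x)]
            exact mul_le_mul_of_nonneg_left hlog (abs_nonneg _)
          · have hx1 : ρ₁ x = 0 := by
              by_contra hc; exact hxS (Or.inl hc)
            have hx2 : ρ₂ x = 0 := by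
              by_contra hc; exact hxS (Or.inr hc)
            rw [hx1, hx2]
            simp
      _ = (∑ x, |ρ₁ x - ρ₂ x|) * (-Real.log mval) := (Finset.sum_mul _ _ _).symm
  -- first term bound
  have hcomm : ∑ x, |ρ₂ x - ρ₁ x| = ∑ x, |ρ₁ x - ρ₂ x| :=
    Finset.sum_congr rfl (fun x _ => abs_sub_comm _ _)
  have hf1 := fannes ρ₂ ρ₁ h20 h21 h10 h11
  have hf2 := fannes ρ₁ ρ₂ h10 h11 h20 h21
  rw [hcomm] at hf1
  have hT1 : |∑ x, Real.negMulLog (ρ₂ x) - ∑ x, Real.negMulLog (ρ₁ x)| ≤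
      (1 / 2) * (∑ x, |ρ₁ x - ρ₂ x|) * Real.log (Fintype.card X - 1) +
        h2 ((1 / 2) * ∑ x, |ρ₁ x - ρ₂ x|) := by
    rw [abs_sub_le_iff]
    constructor
    · exact hf1
    · exact hf2
  have hsplit : klDiv' ρ₁ σ - klDiv' ρ₂ σ =
      (∑ x, Real.negMulLog (ρ₂ x) - ∑ x, Real.negMulLog (ρ₁ x)) +
      (∑ x, ρ₂ x * Real.log (σ x) - ∑ x, ρ₁ x * Real.log (σ x)) := by
    rw [hkl1, hkl2]; ring
  rw [hsplit]
  calc |_ + _| ≤ _ := abs_add_le _ _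
    _ ≤ _ := add_le_add hT1 hT2
end
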